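/- arXiv:math/0611658 — 6 statements merged into one kernel-verified Lean document; each statement's English description precedes it below -/
import Mathlib

section
/- If F = f + iw + ju + kv : ℍⁿ → ℍ is continuously differentiable and regular (i.e., D̄_α F = (∂_{t^α} + i∂_{x^α} + j∂_{y^α} + k∂_{z^α})F = 0 for all α), then its real part f satisfies D̄_β D_α f = 0 for all α, β, where D_α = ∂_{t^α} - i∂_{x^α} - j∂_{y^α} - k∂_{z^α}. -/
open scoped Quaternion


/-- The quaternion unit `i`. -/
def qI : ℍ[ℝ] := ⟨0, 1, 0, 0⟩
/-- The quaternion unit `j`. -/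
def qJ : ℍ[ℝ] := ⟨0, 0, 1, 0⟩
/-- The quaternion unit `k`. -/
def qK : ℍ[ℝ] := ⟨0, 0, 0, 1⟩

/-- Points of `ℍⁿ ≅ ℝ^{4n}`, with `qᵅ = tᵅ + i xᵅ + j yᵅ + k zᵅ`. -/
abbrev QPt (n : ℕ) := Fin n → ℝ × ℝ × ℝ × ℝ

/-- The coordinate basis vector in the direction of the `m`-th real coordinate of the
`α`-th quaternionic variable (`m = 0,1,2,3` for `t,x,y,z`). -/
def qBase {n : ℕ} (α : Fin n) (m : Fin 4) : QPt n := fun β =>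
  if β = α then
    (match m with
      | 0 => ((1:ℝ), 0, 0, 0)
      | 1 => (0, (1:ℝ), 0, 0)
      | 2 => (0, 0, (1:ℝ), 0)
      | 3 => (0, 0, 0, (1:ℝ)))
  else 0

/-- Partial derivative of a real-valued function in direction `v`. -/
noncomputable def pdR {n : ℕ} (v : QPt n) (f : QPt n → ℝ) : QPt n → ℝ :=
  fun p => fderiv ℝ f p v

/-- Partial derivative of a quaternion-valued function in direction `v`. -/
noncomputable def pdQ {n : ℕ} (v : QPt n) (F : QPt n → ℍ[ℝ]) : QPt n → ℍ[ℝ] :=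
  fun p => fderiv ℝ F p v

/-- `D_α f = ∂_{tᵅ}f - i ∂_{xᵅ}f - j ∂_{yᵅ}f - k ∂_{zᵅ}f` for a real function `f`. -/
noncomputable def Dlow {n : ℕ} (α : Fin n) (f : QPt n → ℝ) : QPt n → ℍ[ℝ] :=
  fun p => ⟨pdR (qBase α 0) f p, -(pdR (qBase α 1) f p),
    -(pdR (qBase α 2) f p), -(pdR (qBase α 3) f p)⟩

/-- `D̄_β f = ∂_{tᵝ}f + i ∂_{xᵝ}f + j ∂_{yᵝ}f + k ∂_{zᵝ}f` for a real function `f`. -/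
noncomputable def DbarLow {n : ℕ} (β : Fin n) (f : QPt n → ℝ) : QPt n → ℍ[ℝ] :=
  fun p => ⟨pdR (qBase β 0) f p, pdR (qBase β 1) f p,
    pdR (qBase β 2) f p, pdR (qBase β 3) f p⟩

/-- `D̄_β G = ∂_{tᵝ}G + i ∂_{xᵝ}G + j ∂_{yᵝ}G + k ∂_{zᵝ}G` for a quaternion-valued `G`. -/
noncomputable def DbarQ {n : ℕ} (β : Fin n) (G : QPt n → ℍ[ℝ]) : QPt n → ℍ[ℝ] :=
  fun p => pdQ (qBase β 0) G p + qI * pdQ (qBase β 1) G p +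
    qJ * pdQ (qBase β 2) G p +
    qK * pdQ (qBase β 3) G p

/-- `D_α G = ∂_{tᵅ}G - i ∂_{xᵅ}G - j ∂_{yᵅ}G - k ∂_{zᵅ}G` for a quaternion-valued `G`. -/
noncomputable def DQ {n : ℕ} (α : Fin n) (G : QPt n → ℍ[ℝ]) : QPt n → ℍ[ℝ] :=
  fun p => pdQ (qBase α 0) G p - qI * pdQ (qBase α 1) G p -
    qJ * pdQ (qBase α 2) G p -
    qK * pdQ (qBase α 3) G p

/-!
Conjugating the regularity equation `D̄_α F = 0` and using `F̄ = 2f - F` shows that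
`D_α f = ½ ∑ₗ (∂_{α,l} F) ēₗ` with `e = (1, i, j, k)`: the operator `D_α` applied to `F`
*from the right*.
Constant-coefficient operators acting from the left commute with those acting from the right
(associativity and symmetry of second derivatives), so `D̄_β D_α f = ½ (D̄_β F) D_α = 0`.
-/

section DiffOp

variable {𝕜 E A ι : Type*} [RCLike 𝕜] [NormedAddCommGroup E] [NormedSpace 𝕜 E]
  [NormedRing A] [NormedAlgebra 𝕜 A] [Fintype ι]

variable (𝕜) in
noncomputable def leftDiffOp (c : ι → A) (v : ι → E) (G : E → A) : E → A :=
  fun p => ∑ i, c i * fderiv 𝕜 G p (v i)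

variable (𝕜) in
noncomputable def rightDiffOp (c : ι → A) (v : ι → E) (G : E → A) : E → A :=
  fun p => ∑ i, fderiv 𝕜 G p (v i) * c i

lemma hasFDerivAt_fderiv_apply {G : E → A} (hG : ContDiff 𝕜 2 G) (u p : E) :
    HasFDerivAt (fun q => fderiv 𝕜 G q u) ((fderiv 𝕜 (fderiv 𝕜 G) p).flip u) p := by
  have hG' : Differentiable 𝕜 (fderiv 𝕜 G) :=
    (hG.fderiv_right (m := 1) (by norm_num)).differentiable one_ne_zero
  exact (ContinuousLinearMap.apply 𝕜 A u).hasFDerivAt.comp p (hG' p).hasFDerivAt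

lemma fderiv_leftDiffOp_apply {G : E → A} (hG : ContDiff 𝕜 2 G) (c : ι → A) (v : ι → E)
    (p u : E) :
    fderiv 𝕜 (leftDiffOp 𝕜 c v G) p u = ∑ i, c i * fderiv 𝕜 (fderiv 𝕜 G) p u (v i) := by
  have h := HasFDerivAt.fun_sum (u := Finset.univ) fun i _ =>
    (hasFDerivAt_fderiv_apply hG (v i) p).const_mul (c i)
  unfold leftDiffOp
  rw [h.fderiv]
  simp

lemma fderiv_rightDiffOp_apply {G : E → A} (hG : ContDiff 𝕜 2 G) (c : ι → A) (v : ι → E)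
    (p u : E) :
    fderiv 𝕜 (rightDiffOp 𝕜 c v G) p u = ∑ i, fderiv 𝕜 (fderiv 𝕜 G) p u (v i) * c i := by
  have h := HasFDerivAt.fun_sum (u := Finset.univ) fun i _ =>
    (hasFDerivAt_fderiv_apply hG (v i) p).mul_const' (c i)
  unfold rightDiffOp
  rw [h.fderiv]
  simp

theorem leftDiffOp_rightDiffOp_comm {κ : Type*} [Fintype κ] {G : E → A} (hG : ContDiff 𝕜 2 G)
    (c : ι → A) (v : ι → E) (d : κ → A) (w : κ → E) :
    leftDiffOp 𝕜 c v (rightDiffOp 𝕜 d w G) = rightDiffOp 𝕜 d w (leftDiffOp 𝕜 c v G) := by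
  funext p
  have hsymm := hG.contDiffAt.isSymmSndFDerivAt (x := p) (by simp)
  simp only [leftDiffOp, rightDiffOp, fderiv_leftDiffOp_apply hG, fderiv_rightDiffOp_apply hG,
    Finset.mul_sum, Finset.sum_mul, mul_assoc, hsymm.eq (v _) (w _)]
  exact Finset.sum_comm

lemma rightDiffOp_zero (c : ι → A) (v : ι → E) : rightDiffOp 𝕜 c v (0 : E → A) = 0 := by
  funext p
  simp [rightDiffOp]

end DiffOp

lemma sum_re_smul_star_eq_of_sum_mul_eq_zero {ι : Type*} [Fintype ι] (e a : ι → ℍ[ℝ])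
    (h : ∑ m, e m * a m = 0) :
    ∑ m, (a m).re • star (e m) = ∑ m, a m * ((2⁻¹ : ℝ) • star (e m)) := by
  have hconj : ∑ m, (2 * (a m).re) • star (e m) = ∑ m, a m * star (e m) := by
    have h' : ∑ m, star (a m) * star (e m) = 0 := by
      simpa only [star_sum, star_mul, star_zero] using congrArg star h
    simpa only [Quaternion.star_eq_two_re_sub (a _), sub_mul, Finset.sum_sub_distrib, sub_eq_zero,
      Quaternion.coe_mul_eq_smul] using h'
  calc ∑ m, (a m).re • star (e m) = ∑ m, (2⁻¹ : ℝ) • (2 * (a m).re) • star (e m) := by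
        simp only [smul_smul, ← mul_assoc, inv_mul_cancel₀ (two_ne_zero' ℝ), one_mul]
    _ = (2⁻¹ : ℝ) • ∑ m, a m * star (e m) := by rw [← Finset.smul_sum, hconj]
    _ = ∑ m, a m * ((2⁻¹ : ℝ) • star (e m)) := by simp only [Finset.smul_sum, mul_smul_comm]

lemma fderiv_re_apply {E : Type*} [NormedAddCommGroup E] [NormedSpace ℝ E] {F : E → ℍ[ℝ]}
    {p : E} (hF : DifferentiableAt ℝ F p) (v : E) :
    fderiv ℝ (fun q => (F q).re) p v = (fderiv ℝ F p v).re := by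
  let reCLM : ℍ[ℝ] →L[ℝ] ℝ := ⟨QuaternionAlgebra.reₗ _ _ _, Quaternion.continuous_re⟩
  exact congrArg (fun L => L v) (reCLM.hasFDerivAt.comp p hF.hasFDerivAt).fderiv

def qUnit : Fin 4 → ℍ[ℝ] := ![1, qI, qJ, qK]

lemma DbarQ_eq_leftDiffOp {n : ℕ} (β : Fin n) (G : QPt n → ℍ[ℝ]) :
    DbarQ β G = leftDiffOp ℝ qUnit (qBase β) G := by
  funext p
  simp [DbarQ, leftDiffOp, pdQ, Fin.sum_univ_four, qUnit, add_assoc]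

lemma Dlow_apply_eq_sum {n : ℕ} (α : Fin n) (f : QPt n → ℝ) (p : QPt n) :
    Dlow α f p = ∑ m, pdR (qBase α m) f p • star (qUnit m) := by
  ext <;> simp [Dlow, Fin.sum_univ_four, qUnit] <;> simp [qI, qJ, qK]

lemma Dlow_re_eq_rightDiffOp {n : ℕ} {F : QPt n → ℍ[ℝ]} (hF : Differentiable ℝ F) {α : Fin n}
    (hreg : DbarQ α F = 0) :
    Dlow α (fun p => (F p).re) =
      rightDiffOp ℝ (fun m => (2⁻¹ : ℝ) • star (qUnit m)) (qBase α) F := by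
  funext p
  have h := congrFun (hreg.symm.trans (DbarQ_eq_leftDiffOp α F)) p
  rw [Dlow_apply_eq_sum]
  simp only [pdR, fderiv_re_apply (hF p)]
  exact sum_re_smul_star_eq_of_sum_mul_eq_zero qUnit _ h.symm

/-- If `F = f + iw + ju + kv : ℍⁿ → ℍ` is `C²` and regular (`D̄_α F = 0` for all `α`),
then its real part `f` satisfies `D̄_β D_α f = 0` for all `α, β`. -/
theorem real_part_of_regular {n : ℕ} (F : QPt n → ℍ[ℝ]) (hF : ContDiff ℝ 2 F)
    (hreg : ∀ α : Fin n, DbarQ α F = 0) :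
    ∀ α β : Fin n, DbarQ β (Dlow α (fun p => (F p).re)) = 0 := by
  intro α β
  rw [Dlow_re_eq_rightDiffOp (hF.differentiable two_ne_zero) (hreg α), DbarQ_eq_leftDiffOp,
    leftDiffOp_rightDiffOp_comm hF, ← DbarQ_eq_leftDiffOp, hreg β, rightDiffOp_zero]
end

section
/- If F = f + iw + ju + kv : ℍⁿ → ℍ is twice continuously differentiable and anti-regular (i.e., D_α F = (∂_{t^α} - i∂_{x^α} - j∂_{y^α} - k∂_{z^α})F = 0 for all α), then its real part f satisfies D_α D̄_β f = 0 for all α, β; equivalently f satisfies the 4n² real equations: ∂²_{t^β t^α}f + ∂²_{x^β x^α}f + ∂²_{y^β y^α}f + ∂²_{z^β z^α}f = 0, -∂²_{x^β t^α}f + ∂²_{t^β x^α}f - ∂²_{y^β z^α}f + ∂²_{z^β y^α}f = 0, ∂²_{t^β y^α}f + ∂²_{x^β z^α}f - ∂²_{y^β t^α}f - ∂²_{z^β x^α}f = 0, ∂²_{t^β z^α}f - ∂²_{x^β y^α}f + ∂²_{y^β x^α}f - ∂²_{z^β t^α}f = 0. -/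
open scoped Quaternion


/-! Directional derivatives of a `C²` anti-regular function are again anti-regular. Hence the
quaternionic 4 × 4 matrix `S m l = ∂_{β,l} ∂_{α,m} F` is annihilated by the combination
`a ↦ a₀ - i a₁ - j a₂ - k a₃` both along its rows (anti-regularity in `qᵝ`) and, by symmetry of
second derivatives, along its columns (anti-regularity in `qᵅ`). The four components of
`D_α D̄_β f` are real linear combinations of the `Re (S m l)`, and these 32 real relations force
them to vanish. -/

section SecondDerivatives

variable {E G : Type*} [NormedAddCommGroup E] [NormedSpace ℝ E]
  [NormedAddCommGroup G] [NormedSpace ℝ G]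

theorem differentiable_fderiv_apply {g : E → G} (hg : ContDiff ℝ 2 g) (w : E) :
    Differentiable ℝ (fun q => fderiv ℝ g q w) :=
  ((hg.fderiv_right (m := 1) le_rfl).differentiable one_ne_zero).clm_apply
    (differentiable_const w)

theorem fderiv_fderiv_apply_comm {g : E → G} (hg : ContDiff ℝ 2 g) (u w p : E) :
    fderiv ℝ (fun q => fderiv ℝ g q w) p u = fderiv ℝ (fun q => fderiv ℝ g q u) p w := by
  have hd : DifferentiableAt ℝ (fderiv ℝ g) p :=
    (hg.fderiv_right (m := 1) le_rfl).differentiable one_ne_zero p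
  rw [fderiv_clm_apply hd (differentiableAt_const w),
    fderiv_clm_apply hd (differentiableAt_const u)]
  simpa using (hg.contDiffAt.isSymmSndFDerivAt
    (by simp [minSmoothness_of_isRCLikeNormedField])).eq u w

end SecondDerivatives

namespace Quaternion

noncomputable def reCLM : ℍ[ℝ] →L[ℝ] ℝ :=
  { toLinearMap := QuaternionAlgebra.reₗ (-1) 0 (-1), cont := continuous_re }

@[simp]
theorem reCLM_apply (q : ℍ[ℝ]) : reCLM q = q.re := rfl

end Quaternion

noncomputable def fueterComb (a : Fin 4 → ℍ[ℝ]) : ℍ[ℝ] := a 0 - qI * a 1 - qJ * a 2 - qK * a 3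

theorem fueterComb_eq_zero_iff (a : Fin 4 → ℍ[ℝ]) :
    fueterComb a = 0 ↔
      (a 0).re + (a 1).imI + (a 2).imJ + (a 3).imK = 0 ∧
      (a 0).imI - (a 1).re - (a 2).imK + (a 3).imJ = 0 ∧
      (a 0).imJ + (a 1).imK - (a 2).re - (a 3).imI = 0 ∧
      (a 0).imK - (a 1).imJ + (a 2).imI - (a 3).re = 0 := by
  simp only [fueterComb, Quaternion.ext_iff, Quaternion.re_sub, Quaternion.imI_sub,
    Quaternion.imJ_sub, Quaternion.imK_sub, Quaternion.re_mul, Quaternion.imI_mul,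
    Quaternion.imJ_mul, Quaternion.imK_mul]
  simp [qI, qJ, qK]

theorem fueterComb_re_eq_zero (S : Fin 4 → Fin 4 → ℍ[ℝ])
    (hcol : ∀ l, fueterComb (fun m => S m l) = 0) (hrow : ∀ m, fueterComb (S m) = 0) :
    fueterComb (fun m => ⟨(S m 0).re, (S m 1).re, (S m 2).re, (S m 3).re⟩) = 0 := by
  refine (fueterComb_eq_zero_iff _).2 ?_
  simp only [fueterComb_eq_zero_iff] at hcol hrow
  obtain ⟨c0, c0', c0'', c0'''⟩ := hcol 0
  obtain ⟨c1, c1', c1'', c1'''⟩ := hcol 1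
  obtain ⟨c2, c2', c2'', c2'''⟩ := hcol 2
  obtain ⟨c3, c3', c3'', c3'''⟩ := hcol 3
  obtain ⟨r0, r0', r0'', r0'''⟩ := hrow 0
  obtain ⟨r1, r1', r1'', r1'''⟩ := hrow 1
  obtain ⟨r2, r2', r2'', r2'''⟩ := hrow 2
  obtain ⟨r3, r3', r3'', r3'''⟩ := hrow 3
  refine ⟨by linarith, by linarith, by linarith, by linarith⟩

variable {n : ℕ}

theorem pdQ_comm {F : QPt n → ℍ[ℝ]} (hF : ContDiff ℝ 2 F) (u w : QPt n) :
    pdQ u (pdQ w F) = pdQ w (pdQ u F) :=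
  funext (fderiv_fderiv_apply_comm hF u w)

theorem pdR_comm {f : QPt n → ℝ} (hf : ContDiff ℝ 2 f) (u w : QPt n) :
    pdR u (pdR w f) = pdR w (pdR u f) :=
  funext (fderiv_fderiv_apply_comm hf u w)

theorem differentiable_pdQ {F : QPt n → ℍ[ℝ]} (hF : ContDiff ℝ 2 F) (v : QPt n) :
    Differentiable ℝ (pdQ v F) :=
  differentiable_fderiv_apply hF v

theorem differentiable_pdR {f : QPt n → ℝ} (hf : ContDiff ℝ 2 f) (v : QPt n) :
    Differentiable ℝ (pdR v f) :=
  differentiable_fderiv_apply hf v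

theorem pdR_re {G : QPt n → ℍ[ℝ]} (hG : Differentiable ℝ G) (v : QPt n) :
    pdR v (fun q => (G q).re) = fun q => (pdQ v G q).re := by
  funext q
  have h := (Quaternion.reCLM.hasFDerivAt.comp q (hG q).hasFDerivAt).fderiv
  simp only [pdR, pdQ]
  rw [show (fun q => (G q).re) = Quaternion.reCLM ∘ G from rfl, h]
  rfl

theorem pdR_pdR_re {F : QPt n → ℍ[ℝ]} (hF : ContDiff ℝ 2 F) (u w : QPt n) :
    pdR u (pdR w (fun q => (F q).re)) = fun q => (pdQ u (pdQ w F) q).re := by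
  simp only [pdR_re (hF.differentiable (by norm_num)), pdR_re (differentiable_pdQ hF w)]

theorem pdQ_mk {a b c d : QPt n → ℝ} {p : QPt n} (ha : DifferentiableAt ℝ a p)
    (hb : DifferentiableAt ℝ b p) (hc : DifferentiableAt ℝ c p) (hd : DifferentiableAt ℝ d p)
    (v : QPt n) :
    pdQ v (fun q => ⟨a q, b q, c q, d q⟩) p = ⟨pdR v a p, pdR v b p, pdR v c p, pdR v d p⟩ := by
  have hsum : (fun q => (⟨a q, b q, c q, d q⟩ : ℍ[ℝ])) =
      fun q => a q • (1 : ℍ[ℝ]) + b q • qI + c q • qJ + d q • qK := by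
    funext q
    ext <;> simp only [Quaternion.re_add, Quaternion.imI_add, Quaternion.imJ_add,
      Quaternion.imK_add, Quaternion.re_smul, Quaternion.imI_smul, Quaternion.imJ_smul,
      Quaternion.imK_smul] <;> simp [qI, qJ, qK]
  have H := (((ha.hasFDerivAt.smul_const (1 : ℍ[ℝ])).fun_add
    (hb.hasFDerivAt.smul_const qI)).fun_add (hc.hasFDerivAt.smul_const qJ)).fun_add
    (hd.hasFDerivAt.smul_const qK)
  simp only [pdQ]
  rw [hsum, H.fderiv]
  ext <;> simp only [add_apply, ContinuousLinearMap.smulRight_apply,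
      Quaternion.re_add, Quaternion.imI_add, Quaternion.imJ_add, Quaternion.imK_add,
      Quaternion.re_smul, Quaternion.imI_smul, Quaternion.imJ_smul, Quaternion.imK_smul] <;>
    simp [pdR, qI, qJ, qK]

theorem pdQ_DbarLow {f : QPt n → ℝ} (hf : ContDiff ℝ 2 f) (β : Fin n) (v : QPt n) :
    pdQ v (DbarLow β f) = DbarLow β (pdR v f) := by
  funext p
  have h := pdQ_mk (differentiable_pdR hf (qBase β 0) p) (differentiable_pdR hf (qBase β 1) p)
    (differentiable_pdR hf (qBase β 2) p) (differentiable_pdR hf (qBase β 3) p) v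
  simp only [pdR_comm hf v] at h
  exact h

theorem DQ_apply (α : Fin n) (G : QPt n → ℍ[ℝ]) (p : QPt n) :
    DQ α G p = fueterComb fun m => pdQ (qBase α m) G p := rfl

theorem pdQ_fueterComb {G : Fin 4 → QPt n → ℍ[ℝ]} {p : QPt n}
    (hG : ∀ m, DifferentiableAt ℝ (G m) p) (v : QPt n) :
    pdQ v (fun q => fueterComb fun m => G m q) p = fueterComb fun m => pdQ v (G m) p := by
  have h := (((hG 0).hasFDerivAt.fun_sub ((hG 1).hasFDerivAt.const_mul qI)).fun_sub
    ((hG 2).hasFDerivAt.const_mul qJ)).fun_sub ((hG 3).hasFDerivAt.const_mul qK)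
  simp only [pdQ, fueterComb]
  rw [h.fderiv]
  simp

theorem DQ_pdQ {F : QPt n → ℍ[ℝ]} (hF : ContDiff ℝ 2 F) (γ : Fin n) (v : QPt n) :
    DQ γ (pdQ v F) = pdQ v (DQ γ F) := by
  funext p
  rw [DQ_apply, show DQ γ F = fun q => fueterComb fun m => pdQ (qBase γ m) F q from rfl,
    pdQ_fueterComb (G := fun m => pdQ (qBase γ m) F)
      (fun m => differentiable_pdQ hF _ p)]
  congr 1
  funext m
  exact congrFun (pdQ_comm hF _ _) p

theorem DQ_pdQ_eq_zero {F : QPt n → ℍ[ℝ]} (hF : ContDiff ℝ 2 F) {γ : Fin n} (hγ : DQ γ F = 0)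
    (v : QPt n) : DQ γ (pdQ v F) = 0 := by
  rw [DQ_pdQ hF, hγ]
  funext p
  simp [pdQ]

/-- If `F : ℍⁿ → ℍ` is `C²` and anti-regular (`D_α F = 0` for all `α`), then its real
part `f` satisfies `D_α D̄_β f = 0` for all `α, β`; equivalently `f` satisfies the
displayed system of `4n²` real second-order PDEs. -/
theorem real_part_of_antiregular {n : ℕ} (F : QPt n → ℍ[ℝ]) (hF : ContDiff ℝ 2 F)
    (hanti : ∀ α : Fin n, DQ α F = 0) :
    (∀ α β : Fin n, DQ α (DbarLow β (fun p => (F p).re)) = 0) ∧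
    (∀ (α β : Fin n) (p : QPt n),
      (pdR (qBase β 0) (pdR (qBase α 0) (fun q => (F q).re)) p +
        pdR (qBase β 1) (pdR (qBase α 1) (fun q => (F q).re)) p +
        pdR (qBase β 2) (pdR (qBase α 2) (fun q => (F q).re)) p +
        pdR (qBase β 3) (pdR (qBase α 3) (fun q => (F q).re)) p = 0) ∧
      (-(pdR (qBase β 1) (pdR (qBase α 0) (fun q => (F q).re)) p) +
        pdR (qBase β 0) (pdR (qBase α 1) (fun q => (F q).re)) p -
        pdR (qBase β 2) (pdR (qBase α 3) (fun q => (F q).re)) p +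
        pdR (qBase β 3) (pdR (qBase α 2) (fun q => (F q).re)) p = 0) ∧
      (pdR (qBase β 0) (pdR (qBase α 2) (fun q => (F q).re)) p +
        pdR (qBase β 1) (pdR (qBase α 3) (fun q => (F q).re)) p -
        pdR (qBase β 2) (pdR (qBase α 0) (fun q => (F q).re)) p -
        pdR (qBase β 3) (pdR (qBase α 1) (fun q => (F q).re)) p = 0) ∧
      (pdR (qBase β 0) (pdR (qBase α 3) (fun q => (F q).re)) p -
        pdR (qBase β 1) (pdR (qBase α 2) (fun q => (F q).re)) p +
        pdR (qBase β 2) (pdR (qBase α 1) (fun q => (F q).re)) p -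
        pdR (qBase β 3) (pdR (qBase α 0) (fun q => (F q).re)) p = 0)) := by
  have hf : ContDiff ℝ 2 (fun q => (F q).re) := Quaternion.reCLM.contDiff.comp hF
  have key : ∀ (α β : Fin n) (p : QPt n),
      fueterComb (fun m => DbarLow β (pdR (qBase α m) (fun q => (F q).re)) p) = 0 := by
    intro α β p
    simp only [DbarLow, pdR_pdR_re hF]
    refine fueterComb_re_eq_zero (fun m l => pdQ (qBase β l) (pdQ (qBase α m) F) p)
      (fun l => ?_) (fun m => congrFun (DQ_pdQ_eq_zero hF (hanti β) (qBase α m)) p)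
    simp only [pdQ_comm hF (qBase β l)]
    exact congrFun (DQ_pdQ_eq_zero hF (hanti α) (qBase β l)) p
  refine ⟨fun α β => funext fun p => ?_, fun α β p => ?_⟩
  · rw [Pi.zero_apply, DQ_apply]
    simp only [pdQ_DbarLow hf]
    exact key α β p
  · obtain ⟨h1, h2, h3, h4⟩ := (fueterComb_eq_zero_iff _).1 (key α β p)
    simp only [DbarLow] at h1 h2 h3 h4
    exact ⟨h1, by linarith, by linarith, by linarith⟩
end

section
/- On the quaternionic Heisenberg group, the function h(q, ω) = c[(1 + ν|q|²)² + ν²(x² + y² + z²)] (with ω = ix + jy + kz, c > 0, ν > 0) satisfies: for every left-invariant horizontal vector field W among {T_α, X_α, Y_α, Z_α}, the fourth horizontal derivatives satisfy T_α⁴ h = X_α⁴ h = Y_α⁴ h = Z_α⁴ h = 24cν², the pure second derivatives agree: T_α² h = X_α² h = Y_α² h = Z_α² h, and the vertical Hessian satisfies ξ₁² h = ξ₂² h = ξ₃² h = 8cν² and ξ_i ξ_j h = 0 for i ≠ j. -/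
/-- Points of the quaternionic Heisenberg group `ℝ^{4n+3}`, with coordinates
`(tᵅ, xᵅ, yᵅ, zᵅ)` for `α = 1,…,n` and central coordinates `(x,y,z)`. -/
abbrev HeisPt (n : ℕ) := (Fin n → ℝ × ℝ × ℝ × ℝ) × (ℝ × ℝ × ℝ)

/-- Action of a vector field on a function: `(V f)(p) = df_p(V(p))`. -/
noncomputable def vfAct {n : ℕ} (V : HeisPt n → HeisPt n) (f : HeisPt n → ℝ) :
    HeisPt n → ℝ :=
  fun p => fderiv ℝ f p (V p)

/-- Commutator of vector fields acting on a function: `[A,B]f = A(Bf) - B(Af)`. -/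
noncomputable def vfBr {n : ℕ} (A B : HeisPt n → HeisPt n) (f : HeisPt n → ℝ) :
    HeisPt n → ℝ :=
  fun p => vfAct A (vfAct B f) p - vfAct B (vfAct A f) p

/-- `T_α = ∂_{tᵅ} + 2xᵅ∂_x + 2yᵅ∂_y + 2zᵅ∂_z`. -/
def Tvf {n : ℕ} (α : Fin n) : HeisPt n → HeisPt n := fun p =>
  (fun β => if β = α then ((1:ℝ), 0, 0, 0) else 0,
    (2 * (p.1 α).2.1, 2 * (p.1 α).2.2.1, 2 * (p.1 α).2.2.2))

/-- `X_α = ∂_{xᵅ} - 2tᵅ∂_x - 2zᵅ∂_y + 2yᵅ∂_z`. -/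
def Xvf {n : ℕ} (α : Fin n) : HeisPt n → HeisPt n := fun p =>
  (fun β => if β = α then (0, (1:ℝ), 0, 0) else 0,
    (-2 * (p.1 α).1, -2 * (p.1 α).2.2.2, 2 * (p.1 α).2.2.1))

/-- `Y_α = ∂_{yᵅ} + 2zᵅ∂_x - 2tᵅ∂_y - 2xᵅ∂_z`. -/
def Yvf {n : ℕ} (α : Fin n) : HeisPt n → HeisPt n := fun p =>
  (fun β => if β = α then (0, 0, (1:ℝ), 0) else 0,
    (2 * (p.1 α).2.2.2, -2 * (p.1 α).1, -2 * (p.1 α).2.1))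

/-- `Z_α = ∂_{zᵅ} - 2yᵅ∂_x + 2xᵅ∂_y - 2tᵅ∂_z`. -/
def Zvf {n : ℕ} (α : Fin n) : HeisPt n → HeisPt n := fun p =>
  (fun β => if β = α then (0, 0, 0, (1:ℝ)) else 0,
    (-2 * (p.1 α).2.2.1, 2 * (p.1 α).2.1, -2 * (p.1 α).1))

/-- The central (vertical) fields `ξ₁ = 2∂_x`, `ξ₂ = 2∂_y`, `ξ₃ = 2∂_z`. -/
def xiVf {n : ℕ} : Fin 3 → HeisPt n → HeisPt n
  | 0 => fun _ => (0, ((2:ℝ), 0, 0))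
  | 1 => fun _ => (0, (0, (2:ℝ), 0))
  | 2 => fun _ => (0, (0, 0, (2:ℝ)))


/-- `|q|² = Σ_α (tᵅ)² + (xᵅ)² + (yᵅ)² + (zᵅ)²`. -/
def qNormSq {n : ℕ} (p : HeisPt n) : ℝ :=
  ∑ α, ((p.1 α).1 ^ 2 + (p.1 α).2.1 ^ 2 + (p.1 α).2.2.1 ^ 2 + (p.1 α).2.2.2 ^ 2)

/-! ### Auxiliary machinery -/

section Aux

variable {n : ℕ}

lemma coordg1 (p v : HeisPt n) (s : ℝ) (β : Fin n) :
    ((p + s • v).1 β).1 = (p.1 β).1 + s * (v.1 β).1 := rfl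
lemma coordg2 (p v : HeisPt n) (s : ℝ) (β : Fin n) :
    ((p + s • v).1 β).2.1 = (p.1 β).2.1 + s * (v.1 β).2.1 := rfl
lemma coordg3 (p v : HeisPt n) (s : ℝ) (β : Fin n) :
    ((p + s • v).1 β).2.2.1 = (p.1 β).2.2.1 + s * (v.1 β).2.2.1 := rfl
lemma coordg4 (p v : HeisPt n) (s : ℝ) (β : Fin n) :
    ((p + s • v).1 β).2.2.2 = (p.1 β).2.2.2 + s * (v.1 β).2.2.2 := rfl
lemma vertg1 (p v : HeisPt n) (s : ℝ) :
    (p + s • v).2.1 = p.2.1 + s * v.2.1 := rfl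
lemma vertg2 (p v : HeisPt n) (s : ℝ) :
    (p + s • v).2.2.1 = p.2.2.1 + s * v.2.2.1 := rfl
lemma vertg3 (p v : HeisPt n) (s : ℝ) :
    (p + s • v).2.2.2 = p.2.2.2 + s * v.2.2.2 := rfl

lemma qNormSq_line (p : HeisPt n) (α : Fin n) (e : ℝ × ℝ × ℝ × ℝ) (u : ℝ × ℝ × ℝ)
    (s : ℝ) :
    qNormSq (p + s • (((fun β => if β = α then e else 0) : Fin n → ℝ × ℝ × ℝ × ℝ), u)) =
      qNormSq p + 2*s*((p.1 α).1*e.1 + (p.1 α).2.1*e.2.1 + (p.1 α).2.2.1*e.2.2.1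
        + (p.1 α).2.2.2*e.2.2.2) + s^2*(e.1^2 + e.2.1^2 + e.2.2.1^2 + e.2.2.2^2) := by
  unfold qNormSq
  set v : HeisPt n := (((fun β => if β = α then e else 0) : Fin n → ℝ × ℝ × ℝ × ℝ), u)
    with hv
  have key : ∀ β : Fin n,
      ((p + s • v).1 β).1 ^ 2 + ((p + s • v).1 β).2.1 ^ 2 + ((p + s • v).1 β).2.2.1 ^ 2
        + ((p + s • v).1 β).2.2.2 ^ 2 =
      ((p.1 β).1 ^ 2 + (p.1 β).2.1 ^ 2 + (p.1 β).2.2.1 ^ 2 + (p.1 β).2.2.2 ^ 2) +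
        (if β = α then (2*s*((p.1 α).1*e.1 + (p.1 α).2.1*e.2.1 + (p.1 α).2.2.1*e.2.2.1
          + (p.1 α).2.2.2*e.2.2.2) + s^2*(e.1^2 + e.2.1^2 + e.2.2.1^2 + e.2.2.2^2))
          else 0) := by
    intro β
    rcases eq_or_ne β α with hβ | hβ
    · subst hβ
      simp only [coordg1, coordg2, coordg3, coordg4, hv, eq_self_iff_true, if_true]
      ring
    · simp only [coordg1, coordg2, coordg3, coordg4, hv, if_neg hβ]
      norm_num
  rw [Finset.sum_congr rfl (fun β _ => key β), Finset.sum_add_distrib,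
    Finset.sum_ite_eq' Finset.univ α]
  simp only [Finset.mem_univ, if_true]
  ring

lemma qNormSq_vert (p : HeisPt n) (u : ℝ × ℝ × ℝ) (s : ℝ) :
    qNormSq (p + s • ((0 : Fin n → ℝ × ℝ × ℝ × ℝ), u)) = qNormSq p := by
  unfold qNormSq
  refine Finset.sum_congr rfl fun β _ => ?_
  simp only [coordg1, coordg2, coordg3, coordg4]
  norm_num

lemma fderiv_dir {f : HeisPt n → ℝ} {p : HeisPt n} (hf : DifferentiableAt ℝ f p)
    (v : HeisPt n) : fderiv ℝ f p v = deriv (fun s : ℝ => f (p + s • v)) 0 := by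
  have hL : HasDerivAt (fun s : ℝ => p + s • v) v 0 := by
    simpa using ((hasDerivAt_id (0:ℝ)).smul_const v).const_add p
  have h0 : HasFDerivAt f (fderiv ℝ f p) (p + (0:ℝ) • v) := by
    simpa using hf.hasFDerivAt
  exact ((h0.comp_hasDerivAt 0 hL).deriv).symm

lemma deriv_quartic {f : ℝ → ℝ} {A B C D E : ℝ}
    (hf : ∀ s, f s = A + B*s + C*s^2 + D*s^3 + E*s^4) : deriv f 0 = B := by
  have H := (((((hasDerivAt_id (0:ℝ)).const_mul B).add
      ((hasDerivAt_pow 2 (0:ℝ)).const_mul C)).add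
      ((hasDerivAt_pow 3 (0:ℝ)).const_mul D)).add
      ((hasDerivAt_pow 4 (0:ℝ)).const_mul E)).const_add A
  have heq : f =ᶠ[nhds (0:ℝ)]
      (fun x => A + (B * id x + C * x ^ 2 + D * x ^ 3 + E * x ^ 4)) :=
    Filter.Eventually.of_forall fun s => by rw [hf s]; simp only [id_eq]; ring
  rw [(H.congr_of_eventuallyEq heq).deriv]; norm_num

lemma deriv_quad {f : ℝ → ℝ} {A B C : ℝ}
    (hf : ∀ s, f s = A + B*s + C*s^2) : deriv f 0 = B :=
  deriv_quartic (A := A) (C := C) (D := 0) (E := 0) (fun s => by rw [hf s]; ring)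

lemma deriv_shape1 {f : ℝ → ℝ} {c ν Q t E x y z u1 u2 u3 : ℝ}
    (hf : ∀ s, f s = c * ((1 + ν*(Q + 2*t*s + E*s^2))^2
      + ν^2*((x + u1*s)^2 + (y + u2*s)^2 + (z + u3*s)^2))) :
    deriv f 0 = 4*c*ν*t*(1+ν*Q) + 2*c*ν^2*(x*u1 + y*u2 + z*u3) :=
  deriv_quartic
    (A := c*((1+ν*Q)^2 + ν^2*(x^2+y^2+z^2)))
    (C := c*(2*(1+ν*Q)*ν*E + ν^2*(4*t^2) + ν^2*(u1^2+u2^2+u3^2)))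
    (D := c*(ν^2*(4*t*E)))
    (E := c*(ν^2*E^2))
    (fun s => by rw [hf s]; ring)

lemma deriv_shape2 {f : ℝ → ℝ} {a ν w0 w1 Q t E b i0 i1 i2 : ℝ}
    (hf : ∀ s, f s = a*(w0 + w1*s)*(1 + ν*(Q + 2*t*s + E*s^2)) + b*(i0 + i1*s + i2*s^2)) :
    deriv f 0 = a*w1*(1+ν*Q) + 2*a*ν*w0*t + b*i1 :=
  deriv_quartic
    (A := a*w0*(1+ν*Q) + b*i0)
    (C := a*(2*ν*t*w1 + ν*E*w0) + b*i2)
    (D := a*w1*ν*E)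
    (E := 0)
    (fun s => by rw [hf s]; ring)

/-- The function `h` itself. -/
def hFun (c ν : ℝ) : HeisPt n → ℝ := fun p =>
  c * ((1 + ν * qNormSq p) ^ 2 + ν ^ 2 * (p.2.1 ^ 2 + p.2.2.1 ^ 2 + p.2.2.2 ^ 2))

def h1T (c ν : ℝ) (α : Fin n) : HeisPt n → ℝ := fun p =>
  4*c*ν*(p.1 α).1*(1+ν*qNormSq p)
    + 2*c*ν^2*(p.2.1*(2*(p.1 α).2.1) + p.2.2.1*(2*(p.1 α).2.2.1)
        + p.2.2.2*(2*(p.1 α).2.2.2))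

def h1X (c ν : ℝ) (α : Fin n) : HeisPt n → ℝ := fun p =>
  4*c*ν*(p.1 α).2.1*(1+ν*qNormSq p)
    + 2*c*ν^2*(p.2.1*(-2*(p.1 α).1) + p.2.2.1*(-2*(p.1 α).2.2.2)
        + p.2.2.2*(2*(p.1 α).2.2.1))

def h1Y (c ν : ℝ) (α : Fin n) : HeisPt n → ℝ := fun p =>
  4*c*ν*(p.1 α).2.2.1*(1+ν*qNormSq p)
    + 2*c*ν^2*(p.2.1*(2*(p.1 α).2.2.2) + p.2.2.1*(-2*(p.1 α).1)
        + p.2.2.2*(-2*(p.1 α).2.1))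

def h1Z (c ν : ℝ) (α : Fin n) : HeisPt n → ℝ := fun p =>
  4*c*ν*(p.1 α).2.2.2*(1+ν*qNormSq p)
    + 2*c*ν^2*(p.2.1*(-2*(p.1 α).2.2.1) + p.2.2.1*(2*(p.1 α).2.1)
        + p.2.2.2*(-2*(p.1 α).1))

/-- The common second pure horizontal derivative. -/
def h2F (c ν : ℝ) (α : Fin n) : HeisPt n → ℝ := fun p =>
  4*c*ν*(1+ν*qNormSq p)
    + 8*c*ν^2*((p.1 α).1^2 + (p.1 α).2.1^2 + (p.1 α).2.2.1^2 + (p.1 α).2.2.2^2)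

lemma diff_qNormSq : Differentiable ℝ (qNormSq (n := n)) := by
  unfold qNormSq; fun_prop

lemma diff_hFun (c ν : ℝ) : Differentiable ℝ (hFun c ν (n := n)) := by
  unfold hFun; have := diff_qNormSq (n := n); fun_prop

lemma diff_h1T (c ν : ℝ) (α : Fin n) : Differentiable ℝ (h1T c ν α) := by
  unfold h1T; have := diff_qNormSq (n := n); fun_prop
lemma diff_h1X (c ν : ℝ) (α : Fin n) : Differentiable ℝ (h1X c ν α) := by
  unfold h1X; have := diff_qNormSq (n := n); fun_prop
lemma diff_h1Y (c ν : ℝ) (α : Fin n) : Differentiable ℝ (h1Y c ν α) := by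
  unfold h1Y; have := diff_qNormSq (n := n); fun_prop
lemma diff_h1Z (c ν : ℝ) (α : Fin n) : Differentiable ℝ (h1Z c ν α) := by
  unfold h1Z; have := diff_qNormSq (n := n); fun_prop
lemma diff_h2F (c ν : ℝ) (α : Fin n) : Differentiable ℝ (h2F c ν α) := by
  unfold h2F; have := diff_qNormSq (n := n); fun_prop

/-! ### The `T` chain -/

lemma stepT1 (c ν : ℝ) (α : Fin n) : vfAct (Tvf α) (hFun c ν) = h1T c ν α := by
  funext p
  show fderiv ℝ (hFun c ν) p (Tvf α p) = _
  rw [fderiv_dir ((diff_hFun c ν).differentiableAt) (Tvf α p)]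
  have hf : ∀ s : ℝ, hFun c ν (p + s • Tvf α p) =
      c * ((1 + ν*(qNormSq p + 2*(p.1 α).1*s + 1*s^2))^2
        + ν^2*((p.2.1 + (2*(p.1 α).2.1)*s)^2 + (p.2.2.1 + (2*(p.1 α).2.2.1)*s)^2
          + (p.2.2.2 + (2*(p.1 α).2.2.2)*s)^2)) := by
    intro s
    simp only [hFun, Tvf, qNormSq_line, vertg1, vertg2, vertg3, eq_self_iff_true, if_true]
    ring
  rw [deriv_shape1 hf]
  show _ = h1T c ν α p
  simp only [h1T]
  try ring

lemma stepT2 (c ν : ℝ) (α : Fin n) : vfAct (Tvf α) (h1T c ν α) = h2F c ν α := by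
  funext p
  show fderiv ℝ (h1T c ν α) p (Tvf α p) = _
  rw [fderiv_dir ((diff_h1T c ν α).differentiableAt) (Tvf α p)]
  have hf : ∀ s : ℝ, h1T c ν α (p + s • Tvf α p) =
      (4*c*ν)*((p.1 α).1 + 1*s)*(1 + ν*(qNormSq p + 2*(p.1 α).1*s + 1*s^2))
      + (2*c*ν^2)*((p.2.1*(2*(p.1 α).2.1) + p.2.2.1*(2*(p.1 α).2.2.1)
          + p.2.2.2*(2*(p.1 α).2.2.2))
        + (4*((p.1 α).2.1^2 + (p.1 α).2.2.1^2 + (p.1 α).2.2.2^2))*s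
        + 0*s^2) := by
    intro s
    simp only [h1T, Tvf, qNormSq_line, coordg1, coordg2, coordg3, coordg4,
      vertg1, vertg2, vertg3, eq_self_iff_true, if_true]
    ring
  rw [deriv_shape2 hf]
  show _ = h2F c ν α p
  simp only [h2F]
  try ring

lemma stepT3 (c ν : ℝ) (α : Fin n) :
    vfAct (Tvf α) (h2F c ν α) = fun p => 24*c*ν^2*(p.1 α).1 := by
  funext p
  show fderiv ℝ (h2F c ν α) p (Tvf α p) = _
  rw [fderiv_dir ((diff_h2F c ν α).differentiableAt) (Tvf α p)]
  have hf : ∀ s : ℝ, h2F c ν α (p + s • Tvf α p) =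
      (4*c*ν*(1+ν*qNormSq p)
        + 8*c*ν^2*((p.1 α).1^2 + (p.1 α).2.1^2 + (p.1 α).2.2.1^2 + (p.1 α).2.2.2^2))
      + (24*c*ν^2*(p.1 α).1)*s + (4*c*ν^2 + 8*c*ν^2)*s^2 := by
    intro s
    simp only [h2F, Tvf, qNormSq_line, coordg1, coordg2, coordg3, coordg4,
      eq_self_iff_true, if_true]
    ring
  rw [deriv_quad hf]

lemma stepT4 (c ν : ℝ) (α : Fin n) :
    vfAct (Tvf α) (fun p : HeisPt n => 24*c*ν^2*(p.1 α).1) = fun _ => 24*c*ν^2 := by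
  funext p
  show fderiv ℝ (fun p : HeisPt n => 24*c*ν^2*(p.1 α).1) p (Tvf α p) = _
  rw [fderiv_dir (by fun_prop) (Tvf α p)]
  have hf : ∀ s : ℝ, 24*c*ν^2*((p + s • Tvf α p).1 α).1 =
      (24*c*ν^2*(p.1 α).1) + (24*c*ν^2)*s + 0*s^2 := by
    intro s
    simp only [Tvf, coordg1, eq_self_iff_true, if_true]
    ring
  rw [deriv_quad hf]

/-! ### The `X` chain -/

lemma stepX1 (c ν : ℝ) (α : Fin n) : vfAct (Xvf α) (hFun c ν) = h1X c ν α := by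
  funext p
  show fderiv ℝ (hFun c ν) p (Xvf α p) = _
  rw [fderiv_dir ((diff_hFun c ν).differentiableAt) (Xvf α p)]
  have hf : ∀ s : ℝ, hFun c ν (p + s • Xvf α p) =
      c * ((1 + ν*(qNormSq p + 2*(p.1 α).2.1*s + 1*s^2))^2
        + ν^2*((p.2.1 + (-2*(p.1 α).1)*s)^2 + (p.2.2.1 + (-2*(p.1 α).2.2.2)*s)^2
          + (p.2.2.2 + (2*(p.1 α).2.2.1)*s)^2)) := by
    intro s
    simp only [hFun, Xvf, qNormSq_line, vertg1, vertg2, vertg3, eq_self_iff_true, if_true]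
    ring
  rw [deriv_shape1 hf]
  show _ = h1X c ν α p
  simp only [h1X]
  try ring

lemma stepX2 (c ν : ℝ) (α : Fin n) : vfAct (Xvf α) (h1X c ν α) = h2F c ν α := by
  funext p
  show fderiv ℝ (h1X c ν α) p (Xvf α p) = _
  rw [fderiv_dir ((diff_h1X c ν α).differentiableAt) (Xvf α p)]
  have hf : ∀ s : ℝ, h1X c ν α (p + s • Xvf α p) =
      (4*c*ν)*((p.1 α).2.1 + 1*s)*(1 + ν*(qNormSq p + 2*(p.1 α).2.1*s + 1*s^2))
      + (2*c*ν^2)*((p.2.1*(-2*(p.1 α).1) + p.2.2.1*(-2*(p.1 α).2.2.2)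
          + p.2.2.2*(2*(p.1 α).2.2.1))
        + (4*((p.1 α).1^2 + (p.1 α).2.2.2^2 + (p.1 α).2.2.1^2))*s
        + 0*s^2) := by
    intro s
    simp only [h1X, Xvf, qNormSq_line, coordg1, coordg2, coordg3, coordg4,
      vertg1, vertg2, vertg3, eq_self_iff_true, if_true]
    ring
  rw [deriv_shape2 hf]
  show _ = h2F c ν α p
  simp only [h2F]
  try ring

lemma stepX3 (c ν : ℝ) (α : Fin n) :
    vfAct (Xvf α) (h2F c ν α) = fun p => 24*c*ν^2*(p.1 α).2.1 := by
  funext p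
  show fderiv ℝ (h2F c ν α) p (Xvf α p) = _
  rw [fderiv_dir ((diff_h2F c ν α).differentiableAt) (Xvf α p)]
  have hf : ∀ s : ℝ, h2F c ν α (p + s • Xvf α p) =
      (4*c*ν*(1+ν*qNormSq p)
        + 8*c*ν^2*((p.1 α).1^2 + (p.1 α).2.1^2 + (p.1 α).2.2.1^2 + (p.1 α).2.2.2^2))
      + (24*c*ν^2*(p.1 α).2.1)*s + (4*c*ν^2 + 8*c*ν^2)*s^2 := by
    intro s
    simp only [h2F, Xvf, qNormSq_line, coordg1, coordg2, coordg3, coordg4,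
      eq_self_iff_true, if_true]
    ring
  rw [deriv_quad hf]

lemma stepX4 (c ν : ℝ) (α : Fin n) :
    vfAct (Xvf α) (fun p : HeisPt n => 24*c*ν^2*(p.1 α).2.1) = fun _ => 24*c*ν^2 := by
  funext p
  show fderiv ℝ (fun p : HeisPt n => 24*c*ν^2*(p.1 α).2.1) p (Xvf α p) = _
  rw [fderiv_dir (by fun_prop) (Xvf α p)]
  have hf : ∀ s : ℝ, 24*c*ν^2*((p + s • Xvf α p).1 α).2.1 =
      (24*c*ν^2*(p.1 α).2.1) + (24*c*ν^2)*s + 0*s^2 := by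
    intro s
    simp only [Xvf, coordg2, eq_self_iff_true, if_true]
    ring
  rw [deriv_quad hf]

/-! ### The `Y` chain -/

lemma stepY1 (c ν : ℝ) (α : Fin n) : vfAct (Yvf α) (hFun c ν) = h1Y c ν α := by
  funext p
  show fderiv ℝ (hFun c ν) p (Yvf α p) = _
  rw [fderiv_dir ((diff_hFun c ν).differentiableAt) (Yvf α p)]
  have hf : ∀ s : ℝ, hFun c ν (p + s • Yvf α p) =
      c * ((1 + ν*(qNormSq p + 2*(p.1 α).2.2.1*s + 1*s^2))^2
        + ν^2*((p.2.1 + (2*(p.1 α).2.2.2)*s)^2 + (p.2.2.1 + (-2*(p.1 α).1)*s)^2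
          + (p.2.2.2 + (-2*(p.1 α).2.1)*s)^2)) := by
    intro s
    simp only [hFun, Yvf, qNormSq_line, vertg1, vertg2, vertg3, eq_self_iff_true, if_true]
    ring
  rw [deriv_shape1 hf]
  show _ = h1Y c ν α p
  simp only [h1Y]
  try ring

lemma stepY2 (c ν : ℝ) (α : Fin n) : vfAct (Yvf α) (h1Y c ν α) = h2F c ν α := by
  funext p
  show fderiv ℝ (h1Y c ν α) p (Yvf α p) = _
  rw [fderiv_dir ((diff_h1Y c ν α).differentiableAt) (Yvf α p)]
  have hf : ∀ s : ℝ, h1Y c ν α (p + s • Yvf α p) =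
      (4*c*ν)*((p.1 α).2.2.1 + 1*s)*(1 + ν*(qNormSq p + 2*(p.1 α).2.2.1*s + 1*s^2))
      + (2*c*ν^2)*((p.2.1*(2*(p.1 α).2.2.2) + p.2.2.1*(-2*(p.1 α).1)
          + p.2.2.2*(-2*(p.1 α).2.1))
        + (4*((p.1 α).2.2.2^2 + (p.1 α).1^2 + (p.1 α).2.1^2))*s
        + 0*s^2) := by
    intro s
    simp only [h1Y, Yvf, qNormSq_line, coordg1, coordg2, coordg3, coordg4,
      vertg1, vertg2, vertg3, eq_self_iff_true, if_true]
    ring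
  rw [deriv_shape2 hf]
  show _ = h2F c ν α p
  simp only [h2F]
  try ring

lemma stepY3 (c ν : ℝ) (α : Fin n) :
    vfAct (Yvf α) (h2F c ν α) = fun p => 24*c*ν^2*(p.1 α).2.2.1 := by
  funext p
  show fderiv ℝ (h2F c ν α) p (Yvf α p) = _
  rw [fderiv_dir ((diff_h2F c ν α).differentiableAt) (Yvf α p)]
  have hf : ∀ s : ℝ, h2F c ν α (p + s • Yvf α p) =
      (4*c*ν*(1+ν*qNormSq p)
        + 8*c*ν^2*((p.1 α).1^2 + (p.1 α).2.1^2 + (p.1 α).2.2.1^2 + (p.1 α).2.2.2^2))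
      + (24*c*ν^2*(p.1 α).2.2.1)*s + (4*c*ν^2 + 8*c*ν^2)*s^2 := by
    intro s
    simp only [h2F, Yvf, qNormSq_line, coordg1, coordg2, coordg3, coordg4,
      eq_self_iff_true, if_true]
    ring
  rw [deriv_quad hf]

lemma stepY4 (c ν : ℝ) (α : Fin n) :
    vfAct (Yvf α) (fun p : HeisPt n => 24*c*ν^2*(p.1 α).2.2.1) = fun _ => 24*c*ν^2 := by
  funext p
  show fderiv ℝ (fun p : HeisPt n => 24*c*ν^2*(p.1 α).2.2.1) p (Yvf α p) = _
  rw [fderiv_dir (by fun_prop) (Yvf α p)]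
  have hf : ∀ s : ℝ, 24*c*ν^2*((p + s • Yvf α p).1 α).2.2.1 =
      (24*c*ν^2*(p.1 α).2.2.1) + (24*c*ν^2)*s + 0*s^2 := by
    intro s
    simp only [Yvf, coordg3, eq_self_iff_true, if_true]
    ring
  rw [deriv_quad hf]

/-! ### The `Z` chain -/

lemma stepZ1 (c ν : ℝ) (α : Fin n) : vfAct (Zvf α) (hFun c ν) = h1Z c ν α := by
  funext p
  show fderiv ℝ (hFun c ν) p (Zvf α p) = _
  rw [fderiv_dir ((diff_hFun c ν).differentiableAt) (Zvf α p)]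
  have hf : ∀ s : ℝ, hFun c ν (p + s • Zvf α p) =
      c * ((1 + ν*(qNormSq p + 2*(p.1 α).2.2.2*s + 1*s^2))^2
        + ν^2*((p.2.1 + (-2*(p.1 α).2.2.1)*s)^2 + (p.2.2.1 + (2*(p.1 α).2.1)*s)^2
          + (p.2.2.2 + (-2*(p.1 α).1)*s)^2)) := by
    intro s
    simp only [hFun, Zvf, qNormSq_line, vertg1, vertg2, vertg3, eq_self_iff_true, if_true]
    ring
  rw [deriv_shape1 hf]
  show _ = h1Z c ν α p
  simp only [h1Z]
  try ring

lemma stepZ2 (c ν : ℝ) (α : Fin n) : vfAct (Zvf α) (h1Z c ν α) = h2F c ν α := by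
  funext p
  show fderiv ℝ (h1Z c ν α) p (Zvf α p) = _
  rw [fderiv_dir ((diff_h1Z c ν α).differentiableAt) (Zvf α p)]
  have hf : ∀ s : ℝ, h1Z c ν α (p + s • Zvf α p) =
      (4*c*ν)*((p.1 α).2.2.2 + 1*s)*(1 + ν*(qNormSq p + 2*(p.1 α).2.2.2*s + 1*s^2))
      + (2*c*ν^2)*((p.2.1*(-2*(p.1 α).2.2.1) + p.2.2.1*(2*(p.1 α).2.1)
          + p.2.2.2*(-2*(p.1 α).1))
        + (4*((p.1 α).2.2.1^2 + (p.1 α).2.1^2 + (p.1 α).1^2))*s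
        + 0*s^2) := by
    intro s
    simp only [h1Z, Zvf, qNormSq_line, coordg1, coordg2, coordg3, coordg4,
      vertg1, vertg2, vertg3, eq_self_iff_true, if_true]
    ring
  rw [deriv_shape2 hf]
  show _ = h2F c ν α p
  simp only [h2F]
  try ring

lemma stepZ3 (c ν : ℝ) (α : Fin n) :
    vfAct (Zvf α) (h2F c ν α) = fun p => 24*c*ν^2*(p.1 α).2.2.2 := by
  funext p
  show fderiv ℝ (h2F c ν α) p (Zvf α p) = _
  rw [fderiv_dir ((diff_h2F c ν α).differentiableAt) (Zvf α p)]
  have hf : ∀ s : ℝ, h2F c ν α (p + s • Zvf α p) =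
      (4*c*ν*(1+ν*qNormSq p)
        + 8*c*ν^2*((p.1 α).1^2 + (p.1 α).2.1^2 + (p.1 α).2.2.1^2 + (p.1 α).2.2.2^2))
      + (24*c*ν^2*(p.1 α).2.2.2)*s + (4*c*ν^2 + 8*c*ν^2)*s^2 := by
    intro s
    simp only [h2F, Zvf, qNormSq_line, coordg1, coordg2, coordg3, coordg4,
      eq_self_iff_true, if_true]
    ring
  rw [deriv_quad hf]

lemma stepZ4 (c ν : ℝ) (α : Fin n) :
    vfAct (Zvf α) (fun p : HeisPt n => 24*c*ν^2*(p.1 α).2.2.2) = fun _ => 24*c*ν^2 := by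
  funext p
  show fderiv ℝ (fun p : HeisPt n => 24*c*ν^2*(p.1 α).2.2.2) p (Zvf α p) = _
  rw [fderiv_dir (by fun_prop) (Zvf α p)]
  have hf : ∀ s : ℝ, 24*c*ν^2*((p + s • Zvf α p).1 α).2.2.2 =
      (24*c*ν^2*(p.1 α).2.2.2) + (24*c*ν^2)*s + 0*s^2 := by
    intro s
    simp only [Zvf, coordg4, eq_self_iff_true, if_true]
    ring
  rw [deriv_quad hf]

/-! ### The vertical chain -/

lemma stepXi1 (c ν : ℝ) (u : ℝ × ℝ × ℝ) :
    vfAct (fun _ : HeisPt n => ((0 : Fin n → ℝ × ℝ × ℝ × ℝ), u)) (hFun c ν) =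
      fun p => 2*c*ν^2*(p.2.1*u.1 + p.2.2.1*u.2.1 + p.2.2.2*u.2.2) := by
  funext p
  show fderiv ℝ (hFun c ν) p ((0 : Fin n → ℝ × ℝ × ℝ × ℝ), u) = _
  rw [fderiv_dir ((diff_hFun c ν).differentiableAt) _]
  have hf : ∀ s : ℝ, hFun c ν (p + s • ((0 : Fin n → ℝ × ℝ × ℝ × ℝ), u)) =
      (c * ((1 + ν*qNormSq p)^2 + ν^2*(p.2.1^2 + p.2.2.1^2 + p.2.2.2^2)))
      + (2*c*ν^2*(p.2.1*u.1 + p.2.2.1*u.2.1 + p.2.2.2*u.2.2))*s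
      + (c*ν^2*(u.1^2 + u.2.1^2 + u.2.2^2))*s^2 := by
    intro s
    simp only [hFun, qNormSq_vert, vertg1, vertg2, vertg3]
    ring
  rw [deriv_quad hf]

lemma stepXi2 (c ν k1 k2 k3 : ℝ) (u : ℝ × ℝ × ℝ) :
    vfAct (fun _ : HeisPt n => ((0 : Fin n → ℝ × ℝ × ℝ × ℝ), u))
        (fun p : HeisPt n => 2*c*ν^2*(p.2.1*k1 + p.2.2.1*k2 + p.2.2.2*k3)) =
      fun _ => 2*c*ν^2*(u.1*k1 + u.2.1*k2 + u.2.2*k3) := by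
  funext p
  show fderiv ℝ (fun p : HeisPt n => 2*c*ν^2*(p.2.1*k1 + p.2.2.1*k2 + p.2.2.2*k3)) p
    ((0 : Fin n → ℝ × ℝ × ℝ × ℝ), u) = _
  rw [fderiv_dir (by fun_prop) _]
  have hf : ∀ s : ℝ,
      2*c*ν^2*((p + s • ((0 : Fin n → ℝ × ℝ × ℝ × ℝ), u)).2.1*k1
        + (p + s • ((0 : Fin n → ℝ × ℝ × ℝ × ℝ), u)).2.2.1*k2
        + (p + s • ((0 : Fin n → ℝ × ℝ × ℝ × ℝ), u)).2.2.2*k3) =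
      (2*c*ν^2*(p.2.1*k1 + p.2.2.1*k2 + p.2.2.2*k3))
      + (2*c*ν^2*(u.1*k1 + u.2.1*k2 + u.2.2*k3))*s + 0*s^2 := by
    intro s
    simp only [vertg1, vertg2, vertg3]
    ring
  rw [deriv_quad hf]

end Aux

/-- On the quaternionic Heisenberg group, the function
`h = c[(1 + ν|q|²)² + ν²(x²+y²+z²)]` has fourth horizontal derivatives
`T_α⁴h = X_α⁴h = Y_α⁴h = Z_α⁴h = 24cν²`, equal pure second horizontal derivatives,
vertical Hessian `ξᵢ²h = 8cν²`, and `ξᵢξⱼh = 0` for `i ≠ j`. -/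
theorem heisenberg_special_function {n : ℕ} (c ν : ℝ) (hc : 0 < c) (hν : 0 < ν)
    (h : HeisPt n → ℝ)
    (hh : h = fun p => c * ((1 + ν * qNormSq p) ^ 2 +
      ν ^ 2 * (p.2.1 ^ 2 + p.2.2.1 ^ 2 + p.2.2.2 ^ 2))) :
    (∀ α : Fin n,
      (vfAct (Tvf α) (vfAct (Tvf α) (vfAct (Tvf α) (vfAct (Tvf α) h))) =
        fun _ => 24 * c * ν ^ 2) ∧
      (vfAct (Xvf α) (vfAct (Xvf α) (vfAct (Xvf α) (vfAct (Xvf α) h))) =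
        fun _ => 24 * c * ν ^ 2) ∧
      (vfAct (Yvf α) (vfAct (Yvf α) (vfAct (Yvf α) (vfAct (Yvf α) h))) =
        fun _ => 24 * c * ν ^ 2) ∧
      (vfAct (Zvf α) (vfAct (Zvf α) (vfAct (Zvf α) (vfAct (Zvf α) h))) =
        fun _ => 24 * c * ν ^ 2)) ∧
    (∀ α : Fin n,
      vfAct (Tvf α) (vfAct (Tvf α) h) = vfAct (Xvf α) (vfAct (Xvf α) h) ∧
      vfAct (Tvf α) (vfAct (Tvf α) h) = vfAct (Yvf α) (vfAct (Yvf α) h) ∧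
      vfAct (Tvf α) (vfAct (Tvf α) h) = vfAct (Zvf α) (vfAct (Zvf α) h)) ∧
    (∀ s : Fin 3, vfAct (xiVf s) (vfAct (xiVf s) h) = fun _ => 8 * c * ν ^ 2) ∧
    (∀ s t : Fin 3, s ≠ t → vfAct (xiVf s) (vfAct (xiVf t) h) = 0) := by
  have hH : h = hFun c ν := hh
  rw [hH]
  refine ⟨fun α => ⟨?_, ?_, ?_, ?_⟩, fun α => ⟨?_, ?_, ?_⟩, fun s => ?_,
    fun s t hst => ?_⟩
  · rw [stepT1, stepT2, stepT3, stepT4]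
  · rw [stepX1, stepX2, stepX3, stepX4]
  · rw [stepY1, stepY2, stepY3, stepY4]
  · rw [stepZ1, stepZ2, stepZ3, stepZ4]
  · rw [stepT1, stepT2, stepX1, stepX2]
  · rw [stepT1, stepT2, stepY1, stepY2]
  · rw [stepT1, stepT2, stepZ1, stepZ2]
  · fin_cases s
    · show vfAct (fun _ : HeisPt n => ((0 : Fin n → ℝ × ℝ × ℝ × ℝ), ((2:ℝ), 0, 0)))
        (vfAct (fun _ : HeisPt n => ((0 : Fin n → ℝ × ℝ × ℝ × ℝ), ((2:ℝ), 0, 0)))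
          (hFun c ν)) = fun _ => 8 * c * ν ^ 2
      rw [stepXi1, stepXi2]
      funext p
      norm_num
      ring
    · show vfAct (fun _ : HeisPt n => ((0 : Fin n → ℝ × ℝ × ℝ × ℝ), (0, (2:ℝ), 0)))
        (vfAct (fun _ : HeisPt n => ((0 : Fin n → ℝ × ℝ × ℝ × ℝ), (0, (2:ℝ), 0)))
          (hFun c ν)) = fun _ => 8 * c * ν ^ 2
      rw [stepXi1, stepXi2]
      funext p
      norm_num
      ring
    · show vfAct (fun _ : HeisPt n => ((0 : Fin n → ℝ × ℝ × ℝ × ℝ), (0, 0, (2:ℝ))))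
        (vfAct (fun _ : HeisPt n => ((0 : Fin n → ℝ × ℝ × ℝ × ℝ), (0, 0, (2:ℝ))))
          (hFun c ν)) = fun _ => 8 * c * ν ^ 2
      rw [stepXi1, stepXi2]
      funext p
      norm_num
      ring
  · fin_cases s <;> fin_cases t <;>
      first
      | exact absurd rfl hst
      | (show vfAct (fun _ : HeisPt n => ((0 : Fin n → ℝ × ℝ × ℝ × ℝ), ((2:ℝ), 0, 0)))
            (vfAct (fun _ : HeisPt n => ((0 : Fin n → ℝ × ℝ × ℝ × ℝ), (0, (2:ℝ), 0)))
              (hFun c ν)) = 0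
         rw [stepXi1, stepXi2]; funext p; norm_num)
      | (show vfAct (fun _ : HeisPt n => ((0 : Fin n → ℝ × ℝ × ℝ × ℝ), ((2:ℝ), 0, 0)))
            (vfAct (fun _ : HeisPt n => ((0 : Fin n → ℝ × ℝ × ℝ × ℝ), (0, 0, (2:ℝ))))
              (hFun c ν)) = 0
         rw [stepXi1, stepXi2]; funext p; norm_num)
      | (show vfAct (fun _ : HeisPt n => ((0 : Fin n → ℝ × ℝ × ℝ × ℝ), (0, (2:ℝ), 0)))
            (vfAct (fun _ : HeisPt n => ((0 : Fin n → ℝ × ℝ × ℝ × ℝ), ((2:ℝ), 0, 0)))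
              (hFun c ν)) = 0
         rw [stepXi1, stepXi2]; funext p; norm_num)
      | (show vfAct (fun _ : HeisPt n => ((0 : Fin n → ℝ × ℝ × ℝ × ℝ), (0, (2:ℝ), 0)))
            (vfAct (fun _ : HeisPt n => ((0 : Fin n → ℝ × ℝ × ℝ × ℝ), (0, 0, (2:ℝ))))
              (hFun c ν)) = 0
         rw [stepXi1, stepXi2]; funext p; norm_num)
      | (show vfAct (fun _ : HeisPt n => ((0 : Fin n → ℝ × ℝ × ℝ × ℝ), (0, 0, (2:ℝ))))
            (vfAct (fun _ : HeisPt n => ((0 : Fin n → ℝ × ℝ × ℝ × ℝ), ((2:ℝ), 0, 0)))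
              (hFun c ν)) = 0
         rw [stepXi1, stepXi2]; funext p; norm_num)
      | (show vfAct (fun _ : HeisPt n => ((0 : Fin n → ℝ × ℝ × ℝ × ℝ), (0, 0, (2:ℝ))))
            (vfAct (fun _ : HeisPt n => ((0 : Fin n → ℝ × ℝ × ℝ × ℝ), (0, (2:ℝ), 0)))
              (hFun c ν)) = 0
         rw [stepXi1, stepXi2]; funext p; norm_num)
end

section
/- For (q, p) ∈ ℍⁿ × ℍ with |q|² + |p|² = 1 and p ≠ -1, setting p' = (1+p)⁻¹(1-p) one has Re(p') = |q|²/|1+p|², so that the Cayley transform point (q', p') with q' = (1+p)⁻¹q satisfies Re(p') = |q'|². -/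
/-!
Since `(1 + p)⁻¹ = star (1 + p) / |1 + p|²` and
`star (1 + p) * (1 - p) = 1 - |p|² + (star p - p)` with `star p - p` purely imaginary,
`Re p' = (1 - |p|²) / |1 + p|²`, which is `|q|² / |1 + p|²` on the sphere `|q|² + |p|² = 1`.
Multiplicativity of the norm then gives `|q'|² = |q|² / |1 + p|²`.
-/

open scoped Quaternion

namespace Quaternion

variable {R : Type*} [Field R] [LinearOrder R] [IsStrictOrderedRing R]

theorem re_star_one_add_mul_one_sub (p : ℍ[R]) :
    (star (1 + p) * (1 - p)).re = 1 - normSq p := by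
  have h : star (1 + p) * (1 - p) = 1 - p + star p - star p * p := by
    rw [star_add, star_one]
    noncomm_ring
  rw [h, star_mul_self]
  simp only [re_sub, re_add, re_one, re_star, re_coe]
  ring

theorem re_inv_one_add_mul_one_sub (p : ℍ[R]) :
    ((1 + p)⁻¹ * (1 - p)).re = (1 - normSq p) / normSq (1 + p) := by
  rw [inv_def, smul_mul_assoc, re_smul, re_star_one_add_mul_one_sub, smul_eq_mul,
    inv_mul_eq_div]

end Quaternion

theorem cayley_real_part_general {n : ℕ} (q : Fin n → ℍ[ℝ]) (p : ℍ[ℝ])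
    (hS : (∑ α, Quaternion.normSq (q α)) + Quaternion.normSq p = 1) :
    ((1 + p)⁻¹ * (1 - p)).re =
      (∑ α, Quaternion.normSq (q α)) / Quaternion.normSq (1 + p) ∧
    ((1 + p)⁻¹ * (1 - p)).re = ∑ α, Quaternion.normSq ((1 + p)⁻¹ * q α) := by
  have hre : ((1 + p)⁻¹ * (1 - p)).re =
      (∑ α, Quaternion.normSq (q α)) / Quaternion.normSq (1 + p) := by
    rw [Quaternion.re_inv_one_add_mul_one_sub, ← hS, add_sub_cancel_right]
  refine ⟨hre, hre.trans ?_⟩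
  rw [Finset.sum_div]
  simp only [map_mul, Quaternion.normSq_inv, inv_mul_eq_div]

/-- For `(q,p) ∈ ℍⁿ × ℍ` with `|q|² + |p|² = 1` and `p ≠ -1`, the quaternion
`p' = (1+p)⁻¹(1-p)` satisfies `Re p' = |q|²/|1+p|²`, so the Cayley transform image
`(q',p')` with `q' = (1+p)⁻¹ q` satisfies `Re p' = |q'|²`. -/
theorem cayley_real_part {n : ℕ} (q : Fin n → ℍ[ℝ]) (p : ℍ[ℝ])
    (hS : (∑ α, Quaternion.normSq (q α)) + Quaternion.normSq p = 1)
    (hp : p ≠ -1) :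
    ((1 + p)⁻¹ * (1 - p)).re =
      (∑ α, Quaternion.normSq (q α)) / Quaternion.normSq (1 + p) ∧
    ((1 + p)⁻¹ * (1 - p)).re = ∑ α, Quaternion.normSq ((1 + p)⁻¹ * q α) :=
  cayley_real_part_general q p hS
end

section
/- Let T₀₁, T₀₂, T₀₃ be symmetric endomorphisms of a quaternionic hermitian vector space such that T₀ᵢ anti-commutes with Iᵢ (for each i), and such that I₂(T₀₂)^{+--} = I₁(T₀₁)^{-+-}, I₃(T₀₃)^{-+-} = I₂(T₀₂)^{--+}, I₁(T₀₁)^{--+} = I₃(T₀₃)^{+--}. Define T⁰(X,Y) = g((T₀₁I₁ + T₀₂I₂ + T₀₃I₃)X, Y). Then T⁰ is symmetric and satisfies T⁰(X,Y) + T⁰(I₁X,I₁Y) + T⁰(I₂X,I₂Y) + T⁰(I₃X,I₃Y) = 0 for all X, Y. -/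
open scoped RealInnerProductSpace

/-- If `T₀ᵢ` are symmetric endomorphisms with `T₀ᵢ` anti-commuting with `Iᵢ` and the
compatibility relations `I₂(T₀₂)^{+--} = I₁(T₀₁)^{-+-}`, `I₃(T₀₃)^{-+-} = I₂(T₀₂)^{--+}`,
`I₁(T₀₁)^{--+} = I₃(T₀₃)^{+--}` hold, then
`T⁰(X,Y) = ⟪(T₀₁I₁ + T₀₂I₂ + T₀₃I₃)X, Y⟫` is symmetric and satisfies
`T⁰(X,Y) + T⁰(I₁X,I₁Y) + T⁰(I₂X,I₂Y) + T⁰(I₃X,I₃Y) = 0`. -/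
theorem torsion_tensor_invariance
    {H : Type*} [NormedAddCommGroup H] [InnerProductSpace ℝ H]
    (I₁ I₂ I₃ : H →ₗ[ℝ] H)
    (h11 : I₁ ∘ₗ I₁ = -LinearMap.id) (h22 : I₂ ∘ₗ I₂ = -LinearMap.id)
    (h33 : I₃ ∘ₗ I₃ = -LinearMap.id)
    (h12 : I₁ ∘ₗ I₂ = I₃) (h21 : I₂ ∘ₗ I₁ = -I₃)
    (horth1 : ∀ X Y : H, ⟪I₁ X, I₁ Y⟫ = ⟪X, Y⟫)
    (horth2 : ∀ X Y : H, ⟪I₂ X, I₂ Y⟫ = ⟪X, Y⟫)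
    (horth3 : ∀ X Y : H, ⟪I₃ X, I₃ Y⟫ = ⟪X, Y⟫)
    (T₀₁ T₀₂ T₀₃ : H →ₗ[ℝ] H)
    (hsym1 : ∀ X Y : H, ⟪T₀₁ X, Y⟫ = ⟪X, T₀₁ Y⟫)
    (hsym2 : ∀ X Y : H, ⟪T₀₂ X, Y⟫ = ⟪X, T₀₂ Y⟫)
    (hsym3 : ∀ X Y : H, ⟪T₀₃ X, Y⟫ = ⟪X, T₀₃ Y⟫)
    (hanti1 : T₀₁ ∘ₗ I₁ = -(I₁ ∘ₗ T₀₁))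
    (hanti2 : T₀₂ ∘ₗ I₂ = -(I₂ ∘ₗ T₀₂))
    (hanti3 : T₀₃ ∘ₗ I₃ = -(I₃ ∘ₗ T₀₃))
    (hcomp12 : I₂ ∘ₗ ((4:ℝ)⁻¹ •
        (T₀₂ - I₁ ∘ₗ T₀₂ ∘ₗ I₁ + I₂ ∘ₗ T₀₂ ∘ₗ I₂ + I₃ ∘ₗ T₀₂ ∘ₗ I₃)) =
      I₁ ∘ₗ ((4:ℝ)⁻¹ •
        (T₀₁ + I₁ ∘ₗ T₀₁ ∘ₗ I₁ - I₂ ∘ₗ T₀₁ ∘ₗ I₂ + I₃ ∘ₗ T₀₁ ∘ₗ I₃)))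
    (hcomp23 : I₃ ∘ₗ ((4:ℝ)⁻¹ •
        (T₀₃ + I₁ ∘ₗ T₀₃ ∘ₗ I₁ - I₂ ∘ₗ T₀₃ ∘ₗ I₂ + I₃ ∘ₗ T₀₃ ∘ₗ I₃)) =
      I₂ ∘ₗ ((4:ℝ)⁻¹ •
        (T₀₂ + I₁ ∘ₗ T₀₂ ∘ₗ I₁ + I₂ ∘ₗ T₀₂ ∘ₗ I₂ - I₃ ∘ₗ T₀₂ ∘ₗ I₃)))
    (hcomp31 : I₁ ∘ₗ ((4:ℝ)⁻¹ •
        (T₀₁ + I₁ ∘ₗ T₀₁ ∘ₗ I₁ + I₂ ∘ₗ T₀₁ ∘ₗ I₂ - I₃ ∘ₗ T₀₁ ∘ₗ I₃)) =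
      I₃ ∘ₗ ((4:ℝ)⁻¹ •
        (T₀₃ - I₁ ∘ₗ T₀₃ ∘ₗ I₁ + I₂ ∘ₗ T₀₃ ∘ₗ I₂ + I₃ ∘ₗ T₀₃ ∘ₗ I₃))) :
    (∀ X Y : H,
      ⟪(T₀₁ ∘ₗ I₁ + T₀₂ ∘ₗ I₂ + T₀₃ ∘ₗ I₃) X, Y⟫ =
        ⟪(T₀₁ ∘ₗ I₁ + T₀₂ ∘ₗ I₂ + T₀₃ ∘ₗ I₃) Y, X⟫) ∧
    (∀ X Y : H,
      ⟪(T₀₁ ∘ₗ I₁ + T₀₂ ∘ₗ I₂ + T₀₃ ∘ₗ I₃) X, Y⟫ +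
        ⟪(T₀₁ ∘ₗ I₁ + T₀₂ ∘ₗ I₂ + T₀₃ ∘ₗ I₃) (I₁ X), I₁ Y⟫ +
        ⟪(T₀₁ ∘ₗ I₁ + T₀₂ ∘ₗ I₂ + T₀₃ ∘ₗ I₃) (I₂ X), I₂ Y⟫ +
        ⟪(T₀₁ ∘ₗ I₁ + T₀₂ ∘ₗ I₂ + T₀₃ ∘ₗ I₃) (I₃ X), I₃ Y⟫ = 0) := by
  -- pointwise quaternion product facts
  have p11 : ∀ X : H, I₁ (I₁ X) = -X := fun X => by
    simpa using LinearMap.congr_fun h11 X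
  have p22 : ∀ X : H, I₂ (I₂ X) = -X := fun X => by
    simpa using LinearMap.congr_fun h22 X
  have p33 : ∀ X : H, I₃ (I₃ X) = -X := fun X => by
    simpa using LinearMap.congr_fun h33 X
  have p12 : ∀ X : H, I₁ (I₂ X) = I₃ X := fun X => by
    simpa using LinearMap.congr_fun h12 X
  have p21 : ∀ X : H, I₂ (I₁ X) = -(I₃ X) := fun X => by
    simpa using LinearMap.congr_fun h21 X
  have p13 : ∀ X : H, I₁ (I₃ X) = -(I₂ X) := fun X => by
    rw [← p12 X, p11]
  have p32 : ∀ X : H, I₃ (I₂ X) = -(I₁ X) := fun X => by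
    rw [← p12 (I₂ X), p22, map_neg]
  have p31 : ∀ X : H, I₃ (I₁ X) = I₂ X := fun X => by
    rw [← p12 (I₁ X), p21, map_neg, p13, neg_neg]
  have p23 : ∀ X : H, I₂ (I₃ X) = I₁ X := fun X => by
    rw [← p12 X, p21, p32, neg_neg]
  -- adjoint facts: Iⱼ* = -Iⱼ
  have adj1 : ∀ u v : H, ⟪I₁ u, v⟫ = -⟪u, I₁ v⟫ := fun u v => by
    have h := horth1 u (I₁ v)
    rw [p11, inner_neg_right] at h
    linarith
  have adj2 : ∀ u v : H, ⟪I₂ u, v⟫ = -⟪u, I₂ v⟫ := fun u v => by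
    have h := horth2 u (I₂ v)
    rw [p22, inner_neg_right] at h
    linarith
  have adj3 : ∀ u v : H, ⟪I₃ u, v⟫ = -⟪u, I₃ v⟫ := fun u v => by
    have h := horth3 u (I₃ v)
    rw [p33, inner_neg_right] at h
    linarith
  -- pointwise anticommutation
  have a1 : ∀ X : H, T₀₁ (I₁ X) = -(I₁ (T₀₁ X)) := fun X => by
    simpa using LinearMap.congr_fun hanti1 X
  have a2 : ∀ X : H, T₀₂ (I₂ X) = -(I₂ (T₀₂ X)) := fun X => by
    simpa using LinearMap.congr_fun hanti2 X
  have a3 : ∀ X : H, T₀₃ (I₃ X) = -(I₃ (T₀₃ X)) := fun X => by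
    simpa using LinearMap.congr_fun hanti3 X
  -- symmetry of each summand
  have s1 : ∀ X Y : H, ⟪T₀₁ (I₁ X), Y⟫ = ⟪T₀₁ (I₁ Y), X⟫ := fun X Y => by
    calc ⟪T₀₁ (I₁ X), Y⟫ = ⟪I₁ X, T₀₁ Y⟫ := hsym1 _ _
      _ = -⟪X, I₁ (T₀₁ Y)⟫ := adj1 _ _
      _ = ⟪X, T₀₁ (I₁ Y)⟫ := by rw [a1 Y, inner_neg_right]
      _ = ⟪T₀₁ (I₁ Y), X⟫ := real_inner_comm _ _
  have s2 : ∀ X Y : H, ⟪T₀₂ (I₂ X), Y⟫ = ⟪T₀₂ (I₂ Y), X⟫ := fun X Y => by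
    calc ⟪T₀₂ (I₂ X), Y⟫ = ⟪I₂ X, T₀₂ Y⟫ := hsym2 _ _
      _ = -⟪X, I₂ (T₀₂ Y)⟫ := adj2 _ _
      _ = ⟪X, T₀₂ (I₂ Y)⟫ := by rw [a2 Y, inner_neg_right]
      _ = ⟪T₀₂ (I₂ Y), X⟫ := real_inner_comm _ _
  have s3 : ∀ X Y : H, ⟪T₀₃ (I₃ X), Y⟫ = ⟪T₀₃ (I₃ Y), X⟫ := fun X Y => by
    calc ⟪T₀₃ (I₃ X), Y⟫ = ⟪I₃ X, T₀₃ Y⟫ := hsym3 _ _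
      _ = -⟪X, I₃ (T₀₃ Y)⟫ := adj3 _ _
      _ = ⟪X, T₀₃ (I₃ Y)⟫ := by rw [a3 Y, inner_neg_right]
      _ = ⟪T₀₃ (I₃ Y), X⟫ := real_inner_comm _ _
  -- swap lemma for symmetric maps
  have sw1 : ∀ u v : H, ⟪T₀₁ u, v⟫ = ⟪T₀₁ v, u⟫ := fun u v => by
    rw [hsym1]; exact real_inner_comm _ _
  have sw2 : ∀ u v : H, ⟪T₀₂ u, v⟫ = ⟪T₀₂ v, u⟫ := fun u v => by
    rw [hsym2]; exact real_inner_comm _ _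
  have sw3 : ∀ u v : H, ⟪T₀₃ u, v⟫ = ⟪T₀₃ v, u⟫ := fun u v => by
    rw [hsym3]; exact real_inner_comm _ _
  have part1 : ∀ X Y : H,
      ⟪(T₀₁ ∘ₗ I₁ + T₀₂ ∘ₗ I₂ + T₀₃ ∘ₗ I₃) X, Y⟫ =
        ⟪(T₀₁ ∘ₗ I₁ + T₀₂ ∘ₗ I₂ + T₀₃ ∘ₗ I₃) Y, X⟫ := by
    intro X Y
    simp only [LinearMap.add_apply, LinearMap.comp_apply, inner_add_left]
    rw [s1 X Y, s2 X Y, s3 X Y]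
  refine ⟨part1, fun X Y => ?_⟩
  have key :
      (⟪(T₀₁ ∘ₗ I₁ + T₀₂ ∘ₗ I₂ + T₀₃ ∘ₗ I₃) X, Y⟫ +
        ⟪(T₀₁ ∘ₗ I₁ + T₀₂ ∘ₗ I₂ + T₀₃ ∘ₗ I₃) (I₁ X), I₁ Y⟫ +
        ⟪(T₀₁ ∘ₗ I₁ + T₀₂ ∘ₗ I₂ + T₀₃ ∘ₗ I₃) (I₂ X), I₂ Y⟫ +
        ⟪(T₀₁ ∘ₗ I₁ + T₀₂ ∘ₗ I₂ + T₀₃ ∘ₗ I₃) (I₃ X), I₃ Y⟫) +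
      (⟪(T₀₁ ∘ₗ I₁ + T₀₂ ∘ₗ I₂ + T₀₃ ∘ₗ I₃) Y, X⟫ +
        ⟪(T₀₁ ∘ₗ I₁ + T₀₂ ∘ₗ I₂ + T₀₃ ∘ₗ I₃) (I₁ Y), I₁ X⟫ +
        ⟪(T₀₁ ∘ₗ I₁ + T₀₂ ∘ₗ I₂ + T₀₃ ∘ₗ I₃) (I₂ Y), I₂ X⟫ +
        ⟪(T₀₁ ∘ₗ I₁ + T₀₂ ∘ₗ I₂ + T₀₃ ∘ₗ I₃) (I₃ Y), I₃ X⟫) = 0 := by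
    simp only [LinearMap.add_apply, LinearMap.comp_apply, p11, p22, p33, p12, p21, p13,
      p31, p23, p32, map_neg, inner_neg_left, inner_add_left]
    linarith [sw1 (I₁ X) Y, sw1 (I₁ Y) X, sw1 (I₃ X) (I₂ Y), sw1 (I₃ Y) (I₂ X),
      sw2 (I₂ X) Y, sw2 (I₂ Y) X, sw2 (I₁ X) (I₃ Y), sw2 (I₁ Y) (I₃ X),
      sw3 (I₃ X) Y, sw3 (I₃ Y) X, sw3 (I₂ X) (I₁ Y), sw3 (I₂ Y) (I₁ X)]
  have e0 := part1 X Y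
  have e1 := part1 (I₁ X) (I₁ Y)
  have e2 := part1 (I₂ X) (I₂ Y)
  have e3 := part1 (I₃ X) (I₃ Y)
  linarith
end

section
/- If T₀ = T₀₁I₁ + T₀₂I₂ + T₀₃I₃ where each T₀ᵢ is a symmetric endomorphism anti-commuting with Iᵢ and the compatibility relations I₂(T₀₂)^{+--} = I₁(T₀₁)^{-+-}, I₃(T₀₃)^{-+-} = I₂(T₀₂)^{--+}, I₁(T₀₁)^{--+} = I₃(T₀₃)^{+--} hold, then (T⁰)^{+--} = 2(T₀₂)^{--+}I₂. In particular, if T⁰ = 0 then each T₀ᵢ = 0. -/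
open scoped RealInnerProductSpace

theorem quat_aux {E : Type*} [Ring E] [Module ℝ E] [SMulCommClass ℝ E E] [IsScalarTower ℝ E E]
    (a b c t1 t2 t3 : E)
    (haa : a*a = -1) (hbb : b*b = -1) (hcc : c*c = -1)
    (hab : a*b = c) (hba : b*a = -c)
    (ha1 : t1*a = -(a*t1)) (ha2 : t2*b = -(b*t2)) (ha3 : t3*c = -(c*t3))
    (hc12 : b*(t2 - a*t2*a + b*t2*b + c*t2*c) = a*(t1 + a*t1*a - b*t1*b + c*t1*c))
    (hc23 : c*(t3 + a*t3*a - b*t3*b + c*t3*c) = b*(t2 + a*t2*a + b*t2*b - c*t2*c))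
    (hc31 : a*(t1 + a*t1*a + b*t1*b - c*t1*c) = c*(t3 - a*t3*a + b*t3*b + c*t3*c)) :
    ((t1*a + t2*b + t3*c) - a*((t1*a + t2*b + t3*c))*a + b*((t1*a + t2*b + t3*c))*b
        + c*((t1*a + t2*b + t3*c))*c
      = (2:ℝ) • ((t2 + a*t2*a + b*t2*b - c*t2*c)*b)) ∧
    (t1*a + t2*b + t3*c = 0 → t1 = 0 ∧ t2 = 0 ∧ t3 = 0) := by
  have hcb : c*b = -a := by rw [← hab, mul_assoc, hbb, mul_neg_one]
  have hbc : b*c = a := by rw [← hab, ← mul_assoc, hba, neg_mul, hcb, neg_neg]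
  have hac : a*c = -b := by rw [← hab, ← mul_assoc, haa, neg_one_mul]
  have hca : c*a = b := by rw [← hab, mul_assoc, hba, mul_neg, hac, neg_neg]
  have Haa : ∀ w, a*(a*w) = -w := fun w => by rw [← mul_assoc, haa, neg_one_mul]
  have Hbb : ∀ w, b*(b*w) = -w := fun w => by rw [← mul_assoc, hbb, neg_one_mul]
  have Hcc : ∀ w, c*(c*w) = -w := fun w => by rw [← mul_assoc, hcc, neg_one_mul]
  have Hab : ∀ w, a*(b*w) = c*w := fun w => by rw [← mul_assoc, hab]
  have Hba : ∀ w, b*(a*w) = -(c*w) := fun w => by rw [← mul_assoc, hba, neg_mul]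
  have Hbc : ∀ w, b*(c*w) = a*w := fun w => by rw [← mul_assoc, hbc]
  have Hcb : ∀ w, c*(b*w) = -(a*w) := fun w => by rw [← mul_assoc, hcb, neg_mul]
  have Hca : ∀ w, c*(a*w) = b*w := fun w => by rw [← mul_assoc, hca]
  have Hac : ∀ w, a*(c*w) = -(b*w) := fun w => by rw [← mul_assoc, hac, neg_mul]
  have H1 : ∀ w, t1*(a*w) = -(a*(t1*w)) := fun w => by
    rw [← mul_assoc, ha1, neg_mul, mul_assoc]
  have H2 : ∀ w, t2*(b*w) = -(b*(t2*w)) := fun w => by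
    rw [← mul_assoc, ha2, neg_mul, mul_assoc]
  have H3 : ∀ w, t3*(c*w) = -(c*(t3*w)) := fun w => by
    rw [← mul_assoc, ha3, neg_mul, mul_assoc]
  have h1c : t1*c = -(a*(t1*b)) := by
    rw [← hab, ← mul_assoc, ha1, neg_mul, mul_assoc]
  have H1c : ∀ w, t1*(c*w) = -(a*(t1*(b*w))) := fun w => by
    rw [← mul_assoc, h1c, neg_mul, mul_assoc, mul_assoc]
  have h2c : t2*c = b*(t2*a) := by
    have hc : c = -(b*a) := by rw [hba, neg_neg]
    rw [hc, mul_neg, ← mul_assoc, ha2, neg_mul, neg_neg, mul_assoc]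
  have H2c : ∀ w, t2*(c*w) = b*(t2*(a*w)) := fun w => by
    rw [← mul_assoc, h2c, mul_assoc, mul_assoc]
  have h3a : t3*a = c*(t3*b) := by
    have hah : a = -(c*b) := by rw [hcb, neg_neg]
    rw [hah, mul_neg, ← mul_assoc, ha3, neg_mul, neg_neg, mul_assoc]
  have H3a : ∀ w, t3*(a*w) = c*(t3*(b*w)) := fun w => by
    rw [← mul_assoc, h3a, mul_assoc, mul_assoc]
  -- component abbreviations (4× the components)
  set A := t2 + a*t2*a + b*t2*b - c*t2*c with hA
  set B := t3 + a*t3*a - b*t3*b + c*t3*c with hB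
  set C1 := t1 + a*t1*a + b*t1*b - c*t1*c with hC1
  set D := t3 - a*t3*a + b*t3*b + c*t3*c with hD
  set E1 := t1 + a*t1*a - b*t1*b + c*t1*c with hE1
  set F := t2 - a*t2*a + b*t2*b + c*t2*c with hF
  have key1 : (t1*a + t2*b + t3*c) - a*((t1*a + t2*b + t3*c))*a
      + b*((t1*a + t2*b + t3*c))*b + c*((t1*a + t2*b + t3*c))*c
      = A*b + B*c := by
    rw [hA, hB]
    simp only [mul_add, add_mul, mul_sub, sub_mul, mul_neg, neg_mul, mul_assoc,
      Haa, Hbb, Hcc, Hab, Hba, Hbc, Hcb, Hca, Hac, H1, H2, H3, H1c, H2c, H3a,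
      haa, hbb, hcc, hab, hba, hbc, hcb, hca, hac, ha1, ha2, ha3, h1c, h2c, h3a,
      mul_one, one_mul, mul_neg_one, neg_neg]
    abel
  have hBc : B*c = -(c*B) := by
    rw [hB]
    simp only [mul_add, add_mul, mul_sub, sub_mul, mul_neg, neg_mul, mul_assoc,
      Haa, Hbb, Hcc, Hab, Hba, Hbc, Hcb, Hca, Hac,
      haa, hbb, hcc, hab, hba, hbc, hcb, hca, hac,
      mul_one, one_mul, mul_neg_one, neg_neg, neg_add, neg_sub]
    abel
  have hbA : b*A = -(A*b) := by
    rw [hA]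
    simp only [mul_add, add_mul, mul_sub, sub_mul, mul_neg, neg_mul, mul_assoc,
      Haa, Hbb, Hcc, Hab, Hba, Hbc, Hcb, Hca, Hac,
      haa, hbb, hcc, hab, hba, hbc, hca, hac, hcb,
      mul_one, one_mul, mul_neg_one, neg_neg, neg_add, neg_sub]
    abel
  have hBcAb : B*c = A*b := by rw [hBc, hc23, hbA, neg_neg]
  constructor
  · rw [key1, hBcAb, two_smul ℝ]
  · intro hS
    have h0 : A*b + A*b = 0 := by
      have h0' : A*b + B*c = 0 := by rw [← key1, hS]; simp
      rwa [hBcAb] at h0'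
    have hAb0 : A*b = 0 := by
      have h2 : (2:ℝ) • (A*b) = 0 := by rw [two_smul]; exact h0
      rcases smul_eq_zero.mp h2 with h|h
      · norm_num at h
      · exact h
    have hA0 : A = 0 := by
      have h3 : A * (b*b) = 0 := by rw [← mul_assoc, hAb0, zero_mul]
      rw [hbb, mul_neg_one, neg_eq_zero] at h3; exact h3
    have hB0 : B = 0 := by
      have hBc0 : B*c = 0 := by rw [hBcAb, hAb0]
      have h3 : B * (c*c) = 0 := by rw [← mul_assoc, hBc0, zero_mul]
      rw [hcc, mul_neg_one, neg_eq_zero] at h3; exact h3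
    -- second projection
    have key2 : (t1*a + t2*b + t3*c) + a*((t1*a + t2*b + t3*c))*a
        - b*((t1*a + t2*b + t3*c))*b + c*((t1*a + t2*b + t3*c))*c
        = C1*a + D*c := by
      rw [hC1, hD]
      simp only [mul_add, add_mul, mul_sub, sub_mul, mul_neg, neg_mul, mul_assoc,
        Haa, Hbb, Hcc, Hab, Hba, Hbc, Hcb, Hca, Hac, H1, H2, H3, H1c, H2c, H3a,
        haa, hbb, hcc, hab, hba, hbc, hcb, hca, hac, ha1, ha2, ha3, h1c, h2c, h3a,
        mul_one, one_mul, mul_neg_one, neg_neg]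
      abel
    have hDc : D*c = -(c*D) := by
      rw [hD]
      simp only [mul_add, add_mul, mul_sub, sub_mul, mul_neg, neg_mul, mul_assoc,
        Haa, Hbb, Hcc, Hab, Hba, Hbc, Hcb, Hca, Hac,
        haa, hbb, hcc, hab, hba, hbc, hcb, hca, hac,
        mul_one, one_mul, mul_neg_one, neg_neg, neg_add, neg_sub]
      abel
    have haC1 : a*C1 = -(C1*a) := by
      rw [hC1]
      simp only [mul_add, add_mul, mul_sub, sub_mul, mul_neg, neg_mul, mul_assoc,
        Haa, Hbb, Hcc, Hab, Hba, Hbc, Hcb, Hca, Hac,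
        haa, hbb, hcc, hab, hba, hbc, hcb, hca, hac,
        mul_one, one_mul, mul_neg_one, neg_neg, neg_add, neg_sub]
      abel
    have hC1aDc : C1*a = D*c := by
      rw [hDc, ← hc31, haC1, neg_neg]
    have h02 : D*c + D*c = 0 := by
      have h0' : C1*a + D*c = 0 := by rw [← key2, hS]; simp
      rwa [hC1aDc] at h0'
    have hDc0 : D*c = 0 := by
      have h2 : (2:ℝ) • (D*c) = 0 := by rw [two_smul]; exact h02
      rcases smul_eq_zero.mp h2 with h|h
      · norm_num at h
      · exact h
    have hD0 : D = 0 := by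
      have h3 : D * (c*c) = 0 := by rw [← mul_assoc, hDc0, zero_mul]
      rw [hcc, mul_neg_one, neg_eq_zero] at h3; exact h3
    have hC10 : C1 = 0 := by
      have hca0 : C1*a = 0 := by rw [hC1aDc, hDc0]
      have h3 : C1 * (a*a) = 0 := by rw [← mul_assoc, hca0, zero_mul]
      rw [haa, mul_neg_one, neg_eq_zero] at h3; exact h3
    -- third projection
    have key3 : (t1*a + t2*b + t3*c) + a*((t1*a + t2*b + t3*c))*a
        + b*((t1*a + t2*b + t3*c))*b - c*((t1*a + t2*b + t3*c))*c
        = E1*a + F*b := by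
      rw [hE1, hF]
      simp only [mul_add, add_mul, mul_sub, sub_mul, mul_neg, neg_mul, mul_assoc,
        Haa, Hbb, Hcc, Hab, Hba, Hbc, Hcb, Hca, Hac, H1, H2, H3, H1c, H2c, H3a,
        haa, hbb, hcc, hab, hba, hbc, hcb, hca, hac, ha1, ha2, ha3, h1c, h2c, h3a,
        mul_one, one_mul, mul_neg_one, neg_neg]
      abel
    have hFb : F*b = -(b*F) := by
      rw [hF]
      simp only [mul_add, add_mul, mul_sub, sub_mul, mul_neg, neg_mul, mul_assoc,
        Haa, Hbb, Hcc, Hab, Hba, Hbc, Hcb, Hca, Hac,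
        haa, hbb, hcc, hab, hba, hbc, hcb, hca, hac,
        mul_one, one_mul, mul_neg_one, neg_neg, neg_add, neg_sub]
      abel
    have haE1 : a*E1 = -(E1*a) := by
      rw [hE1]
      simp only [mul_add, add_mul, mul_sub, sub_mul, mul_neg, neg_mul, mul_assoc,
        Haa, Hbb, Hcc, Hab, Hba, Hbc, Hcb, Hca, Hac,
        haa, hbb, hcc, hab, hba, hbc, hca, hac, hcb,
        mul_one, one_mul, mul_neg_one, neg_neg, neg_add, neg_sub]
      abel
    have hE1aFb : E1*a = F*b := by rw [hFb, hc12, haE1, neg_neg]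
    have h03 : F*b + F*b = 0 := by
      have h0' : E1*a + F*b = 0 := by rw [← key3, hS]; simp
      rwa [hE1aFb] at h0'
    have hFb0 : F*b = 0 := by
      have h2 : (2:ℝ) • (F*b) = 0 := by rw [two_smul]; exact h03
      rcases smul_eq_zero.mp h2 with h|h
      · norm_num at h
      · exact h
    have hF0 : F = 0 := by
      have h3 : F * (b*b) = 0 := by rw [← mul_assoc, hFb0, zero_mul]
      rw [hbb, mul_neg_one, neg_eq_zero] at h3; exact h3
    have hE10 : E1 = 0 := by
      have hea0 : E1*a = 0 := by rw [hE1aFb, hFb0]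
      have h3 : E1 * (a*a) = 0 := by rw [← mul_assoc, hea0, zero_mul]
      rw [haa, mul_neg_one, neg_eq_zero] at h3; exact h3
    -- conclude
    have hata : a*t1*a = t1 := by
      rw [mul_assoc, ha1, mul_neg, ← mul_assoc, haa, neg_mul, neg_neg, one_mul]
    have hbtb : b*t2*b = t2 := by
      rw [mul_assoc, ha2, mul_neg, ← mul_assoc, hbb, neg_mul, neg_neg, one_mul]
    have hctc : c*t3*c = t3 := by
      rw [mul_assoc, ha3, mul_neg, ← mul_assoc, hcc, neg_mul, neg_neg, one_mul]
    have ht1 : (4:ℝ) • t1 = 0 := by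
      have : E1 + C1 = (4:ℝ) • t1 := by rw [hE1, hC1, hata]; module
      rw [← this, hE10, hC10, add_zero]
    have ht2 : (4:ℝ) • t2 = 0 := by
      have : A + F = (4:ℝ) • t2 := by rw [hA, hF, hbtb]; module
      rw [← this, hA0, hF0, add_zero]
    have ht3 : (4:ℝ) • t3 = 0 := by
      have : B + D = (4:ℝ) • t3 := by rw [hB, hD, hctc]; module
      rw [← this, hB0, hD0, add_zero]
    refine ⟨?_, ?_, ?_⟩
    · rcases smul_eq_zero.mp ht1 with h|h
      · exact absurd h (by norm_num)
      · exact h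
    · rcases smul_eq_zero.mp ht2 with h|h
      · exact absurd h (by norm_num)
      · exact h
    · rcases smul_eq_zero.mp ht3 with h|h
      · exact absurd h (by norm_num)
      · exact h

/-- With `T₀ᵢ` symmetric, anti-commuting with `Iᵢ`, and satisfying the compatibility
relations, the endomorphism `T⁰ = T₀₁I₁ + T₀₂I₂ + T₀₃I₃` satisfies
`(T⁰)^{+--} = 2(T₀₂)^{--+}I₂`; in particular, if `T⁰ = 0` then each `T₀ᵢ = 0`. -/
theorem torsion_component_formula
    {H : Type*} [NormedAddCommGroup H] [InnerProductSpace ℝ H]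
    (I₁ I₂ I₃ : H →ₗ[ℝ] H)
    (h11 : I₁ ∘ₗ I₁ = -LinearMap.id) (h22 : I₂ ∘ₗ I₂ = -LinearMap.id)
    (h33 : I₃ ∘ₗ I₃ = -LinearMap.id)
    (h12 : I₁ ∘ₗ I₂ = I₃) (h21 : I₂ ∘ₗ I₁ = -I₃)
    (horth1 : ∀ X Y : H, ⟪I₁ X, I₁ Y⟫ = ⟪X, Y⟫)
    (horth2 : ∀ X Y : H, ⟪I₂ X, I₂ Y⟫ = ⟪X, Y⟫)
    (horth3 : ∀ X Y : H, ⟪I₃ X, I₃ Y⟫ = ⟪X, Y⟫)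
    (T₀₁ T₀₂ T₀₃ : H →ₗ[ℝ] H)
    (hsym1 : ∀ X Y : H, ⟪T₀₁ X, Y⟫ = ⟪X, T₀₁ Y⟫)
    (hsym2 : ∀ X Y : H, ⟪T₀₂ X, Y⟫ = ⟪X, T₀₂ Y⟫)
    (hsym3 : ∀ X Y : H, ⟪T₀₃ X, Y⟫ = ⟪X, T₀₃ Y⟫)
    (hanti1 : T₀₁ ∘ₗ I₁ = -(I₁ ∘ₗ T₀₁))
    (hanti2 : T₀₂ ∘ₗ I₂ = -(I₂ ∘ₗ T₀₂))
    (hanti3 : T₀₃ ∘ₗ I₃ = -(I₃ ∘ₗ T₀₃))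
    (hcomp12 : I₂ ∘ₗ ((4:ℝ)⁻¹ •
        (T₀₂ - I₁ ∘ₗ T₀₂ ∘ₗ I₁ + I₂ ∘ₗ T₀₂ ∘ₗ I₂ + I₃ ∘ₗ T₀₂ ∘ₗ I₃)) =
      I₁ ∘ₗ ((4:ℝ)⁻¹ •
        (T₀₁ + I₁ ∘ₗ T₀₁ ∘ₗ I₁ - I₂ ∘ₗ T₀₁ ∘ₗ I₂ + I₃ ∘ₗ T₀₁ ∘ₗ I₃)))
    (hcomp23 : I₃ ∘ₗ ((4:ℝ)⁻¹ •
        (T₀₃ + I₁ ∘ₗ T₀₃ ∘ₗ I₁ - I₂ ∘ₗ T₀₃ ∘ₗ I₂ + I₃ ∘ₗ T₀₃ ∘ₗ I₃)) =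
      I₂ ∘ₗ ((4:ℝ)⁻¹ •
        (T₀₂ + I₁ ∘ₗ T₀₂ ∘ₗ I₁ + I₂ ∘ₗ T₀₂ ∘ₗ I₂ - I₃ ∘ₗ T₀₂ ∘ₗ I₃)))
    (hcomp31 : I₁ ∘ₗ ((4:ℝ)⁻¹ •
        (T₀₁ + I₁ ∘ₗ T₀₁ ∘ₗ I₁ + I₂ ∘ₗ T₀₁ ∘ₗ I₂ - I₃ ∘ₗ T₀₁ ∘ₗ I₃)) =
      I₃ ∘ₗ ((4:ℝ)⁻¹ •
        (T₀₃ - I₁ ∘ₗ T₀₃ ∘ₗ I₁ + I₂ ∘ₗ T₀₃ ∘ₗ I₂ + I₃ ∘ₗ T₀₃ ∘ₗ I₃))) :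
    ((4:ℝ)⁻¹ • ((T₀₁ ∘ₗ I₁ + T₀₂ ∘ₗ I₂ + T₀₃ ∘ₗ I₃)
        - I₁ ∘ₗ (T₀₁ ∘ₗ I₁ + T₀₂ ∘ₗ I₂ + T₀₃ ∘ₗ I₃) ∘ₗ I₁
        + I₂ ∘ₗ (T₀₁ ∘ₗ I₁ + T₀₂ ∘ₗ I₂ + T₀₃ ∘ₗ I₃) ∘ₗ I₂
        + I₃ ∘ₗ (T₀₁ ∘ₗ I₁ + T₀₂ ∘ₗ I₂ + T₀₃ ∘ₗ I₃) ∘ₗ I₃) =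
      (2:ℝ) • (((4:ℝ)⁻¹ •
        (T₀₂ + I₁ ∘ₗ T₀₂ ∘ₗ I₁ + I₂ ∘ₗ T₀₂ ∘ₗ I₂ - I₃ ∘ₗ T₀₂ ∘ₗ I₃)) ∘ₗ I₂)) ∧
    (T₀₁ ∘ₗ I₁ + T₀₂ ∘ₗ I₂ + T₀₃ ∘ₗ I₃ = 0 → T₀₁ = 0 ∧ T₀₂ = 0 ∧ T₀₃ = 0) := by
  
  have haa : I₁ * I₁ = (-1 : H →ₗ[ℝ] H) := h11
  have hbb : I₂ * I₂ = (-1 : H →ₗ[ℝ] H) := h22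
  have hcc : I₃ * I₃ = (-1 : H →ₗ[ℝ] H) := h33
  have hab : I₁ * I₂ = I₃ := h12
  have hba : I₂ * I₁ = -I₃ := h21
  have ha1 : T₀₁ * I₁ = -(I₁ * T₀₁) := hanti1
  have ha2 : T₀₂ * I₂ = -(I₂ * T₀₂) := hanti2
  have ha3 : T₀₃ * I₃ = -(I₃ * T₀₃) := hanti3
  have cancel : ∀ f g x y : H →ₗ[ℝ] H,
      f ∘ₗ ((4:ℝ)⁻¹ • x) = g ∘ₗ ((4:ℝ)⁻¹ • y) → f * x = g * y := by
    intro f g x y h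
    have h' := congrArg (fun z => (4:ℝ) • z) h
    simp only [LinearMap.comp_smul, smul_smul] at h'
    norm_num at h'
    exact h'
  have hc12' : I₂ * (T₀₂ - I₁*T₀₂*I₁ + I₂*T₀₂*I₂ + I₃*T₀₂*I₃)
      = I₁ * (T₀₁ + I₁*T₀₁*I₁ - I₂*T₀₁*I₂ + I₃*T₀₁*I₃) := by
    have := cancel _ _ _ _ hcomp12
    simpa only [← Module.End.mul_eq_comp, ← mul_assoc] using this
  have hc23' : I₃ * (T₀₃ + I₁*T₀₃*I₁ - I₂*T₀₃*I₂ + I₃*T₀₃*I₃)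
      = I₂ * (T₀₂ + I₁*T₀₂*I₁ + I₂*T₀₂*I₂ - I₃*T₀₂*I₃) := by
    have := cancel _ _ _ _ hcomp23
    simpa only [← Module.End.mul_eq_comp, ← mul_assoc] using this
  have hc31' : I₁ * (T₀₁ + I₁*T₀₁*I₁ + I₂*T₀₁*I₂ - I₃*T₀₁*I₃)
      = I₃ * (T₀₃ - I₁*T₀₃*I₁ + I₂*T₀₃*I₂ + I₃*T₀₃*I₃) := by
    have := cancel _ _ _ _ hcomp31
    simpa only [← Module.End.mul_eq_comp, ← mul_assoc] using this
  obtain ⟨main, vanish⟩ := quat_aux I₁ I₂ I₃ T₀₁ T₀₂ T₀₃ haa hbb hcc hab hba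
    ha1 ha2 ha3 hc12' hc23' hc31'
  constructor
  · rw [LinearMap.smul_comp, smul_comm (2:ℝ) ((4:ℝ)⁻¹)]
    apply congrArg
    simpa only [← Module.End.mul_eq_comp, ← mul_assoc] using main
  · intro h
    exact vanish (by simpa only [← Module.End.mul_eq_comp] using h)
end
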